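/- arXiv:1811.00414 — 10 statements merged into one kernel-verified Lean document; each statement's English description precedes it below -/
import Mathlib

section
/- Let x, y ∈ ℂ^n with x ≠ 0. Let i be a random index drawn from the ℓ²-sampling distribution of x (i.e., P(i) = |x_i|²/‖x‖²), and define the complex random variable z = conj(x_i) · y_i · ‖x‖²/|x_i|² (well-defined since only indices with x_i ≠ 0 occur with positive probability). Then E[z] = ⟨x, y⟩ := Σ_{i=1}^n conj(x_i) y_i, and E[|z − ⟨x,y⟩|²] ≤ ‖x‖² · ‖y‖², where ‖·‖ denotes the ℓ²-norm. -/
/-!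
Sampling `i` with probability `p i = ‖x i‖² / ‖x‖²` and reweighting by `1 / p i` is importance
sampling: `p i * z i = conj (x i) * y i` termwise, so the mean is `⟨x, y⟩`. The variance is at
most the second moment, and `p i * ‖z i‖² = ‖x‖² ‖y i‖²` termwise, which sums to `‖x‖² ‖y‖²`.
-/

open Finset

theorem sum_mul_norm_sub_sq_eq_of_sum_eq_one {ι E : Type*} [NormedAddCommGroup E]
    [InnerProductSpace ℝ E] (s : Finset ι) (p : ι → ℝ) (z : ι → E) {μ : E}
    (hp : ∑ i ∈ s, p i = 1) (hμ : ∑ i ∈ s, p i • z i = μ) :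
    ∑ i ∈ s, p i * ‖z i - μ‖ ^ 2 = ∑ i ∈ s, p i * ‖z i‖ ^ 2 - ‖μ‖ ^ 2 := by
  have hcross : ∑ i ∈ s, p i * inner ℝ (z i) μ = ‖μ‖ ^ 2 := by
    simp_rw [← real_inner_smul_left, ← sum_inner, hμ, real_inner_self_eq_norm_sq]
  simp_rw [norm_sub_sq_real, mul_add, mul_sub, mul_left_comm (p _) 2, sum_add_distrib,
    sum_sub_distrib, ← mul_sum, ← sum_mul, hp, hcross]
  ring

section ImportanceSampling

variable {a b w : ℂ} {S : ℝ}

theorem ofReal_div_mul_eq_conj_mul (haS : ‖a‖ ^ 2 ≤ S)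
    (hw : a ≠ 0 → w = (starRingEnd ℂ) a * b * ((S : ℂ) / ((‖a‖ ^ 2 : ℝ) : ℂ))) :
    ((‖a‖ ^ 2 / S : ℝ) : ℂ) * w = (starRingEnd ℂ) a * b := by
  rcases eq_or_ne a 0 with rfl | ha
  · simp
  have hS : (S : ℂ) ≠ 0 := by
    have : 0 < ‖a‖ ^ 2 := by positivity
    exact_mod_cast (this.trans_le haS).ne'
  have ha' : ((‖a‖ : ℝ) : ℂ) ≠ 0 := by simpa using ha
  rw [hw ha]
  push_cast
  field_simp

theorem div_mul_sq_norm_le (haS : ‖a‖ ^ 2 ≤ S)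
    (hw : a ≠ 0 → w = (starRingEnd ℂ) a * b * ((S : ℂ) / ((‖a‖ ^ 2 : ℝ) : ℂ))) :
    ‖a‖ ^ 2 / S * ‖w‖ ^ 2 ≤ S * ‖b‖ ^ 2 := by
  rcases eq_or_ne a 0 with rfl | ha
  · have hS : 0 ≤ S := by simpa using haS
    simpa using mul_nonneg hS (sq_nonneg ‖b‖)
  have hna : ‖a‖ ≠ 0 := norm_ne_zero_iff.mpr ha
  have hS : S ≠ 0 := ((by positivity : 0 < ‖a‖ ^ 2).trans_le haS).ne'
  have hnorm : ‖w‖ = ‖a‖ * ‖b‖ * (|S| / ‖a‖ ^ 2) := by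
    rw [hw ha, norm_mul, norm_mul, norm_div, RCLike.norm_conj, Complex.norm_real,
      Complex.norm_real, Real.norm_eq_abs, Real.norm_eq_abs, abs_of_nonneg (sq_nonneg ‖a‖)]
  refine le_of_eq ?_
  rw [hnorm, mul_pow, mul_pow, div_pow, sq_abs]
  field_simp

end ImportanceSampling

/-- For nonzero `x ∈ ℂ^n` and the ℓ²-sampling distribution
`p i = ‖x i‖² / ‖x‖²`, the random variable `z i = conj (x i) * y i * ‖x‖² / ‖x i‖²`
(defined on indices with `x i ≠ 0`, which are the only ones with positive probability)
has expectation `⟨x, y⟩ = ∑ i, conj (x i) * y i` and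
`E[|z − ⟨x,y⟩|²] ≤ ‖x‖² ‖y‖²`. -/
theorem stmt0 (n : ℕ) (x y : Fin n → ℂ) (hx : x ≠ 0)
    (p : Fin n → ℝ) (hp : ∀ i, p i = ‖x i‖ ^ 2 / ∑ j, ‖x j‖ ^ 2)
    (z : Fin n → ℂ)
    (hz : ∀ i, x i ≠ 0 →
      z i = (starRingEnd ℂ) (x i) * y i * (((∑ j, ‖x j‖ ^ 2 : ℝ) : ℂ) / ((‖x i‖ ^ 2 : ℝ) : ℂ))) :
    (∑ i, ((p i : ℝ) : ℂ) * z i) = (∑ i, (starRingEnd ℂ) (x i) * y i) ∧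
    (∑ i, p i * ‖z i - ∑ j, (starRingEnd ℂ) (x j) * y j‖ ^ 2) ≤
      (∑ i, ‖x i‖ ^ 2) * (∑ i, ‖y i‖ ^ 2) := by
  have hxS (i : Fin n) : ‖x i‖ ^ 2 ≤ ∑ j, ‖x j‖ ^ 2 :=
    single_le_sum (f := fun j ↦ ‖x j‖ ^ 2) (fun j _ ↦ by positivity) (mem_univ i)
  have hmean : ∑ i, ((p i : ℝ) : ℂ) * z i = ∑ i, (starRingEnd ℂ) (x i) * y i :=
    sum_congr rfl fun i _ ↦ by rw [hp i]; exact ofReal_div_mul_eq_conj_mul (hxS i) (hz i)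
  have hp1 : ∑ i, p i = 1 := by
    obtain ⟨i, hi⟩ := Function.ne_iff.mp hx
    have hS : 0 < ∑ j, ‖x j‖ ^ 2 := (pow_pos (norm_pos_iff.mpr hi) 2).trans_le (hxS i)
    simp only [hp, ← sum_div, div_self hS.ne']
  refine ⟨hmean, ?_⟩
  rw [sum_mul_norm_sub_sq_eq_of_sum_eq_one _ p z hp1 (by simpa [Complex.real_smul] using hmean)]
  calc _ ≤ ∑ i, p i * ‖z i‖ ^ 2 := sub_le_self _ (by positivity)
    _ ≤ ∑ i, (∑ j, ‖x j‖ ^ 2) * ‖y i‖ ^ 2 :=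
      sum_le_sum fun i _ ↦ by rw [hp i]; exact div_mul_sq_norm_le (hxS i) (hz i)
    _ = _ := (mul_sum _ _ _).symm
end

section
/- Let ε, δ ∈ (0,1), let n₀ = ⌈9/ε²⌉ and m = ⌈6·log(2/δ)⌉, and let (X_{j,t}), for j ∈ [m] and t ∈ [n₀], be i.i.d. real random variables with mean μ and variance at most V. Let Y_j = (1/n₀) Σ_{t=1}^{n₀} X_{j,t} be the mean of the j-th group, and let Y be a median of Y_1, …, Y_m. Then P(|Y − μ| ≤ (ε/√2)·√V) ≥ 1 − δ/2. -/
/-!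
Each group mean has variance at most `V / n₀ ≤ (2/9) r²` with `r = ε √V / √2`, so by Chebyshev it
misses `μ₀` by more than `r` with probability at most `2/9`. The groups are independent, and the
median can only miss `μ₀` by more than `r` if at least half of the group means do. Chernoff's
bound with exponent `1` on the number of such groups gives probability at most
`exp (-m/2) (1 + (e - 1) · 2/9)^m ≤ exp (-m/6) ≤ δ/2`.
-/

open MeasureTheory ProbabilityTheory Finset

namespace ProbabilityTheory

variable {Ω : Type*} {mΩ : MeasurableSpace Ω} {μ : Measure Ω}

lemma iIndepFun.curry {ι κ β : Type*} [MeasurableSpace β] {X : ι → κ → Ω → β}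
    (hX : ∀ i j, Measurable (X i j)) (h : iIndepFun (fun p : ι × κ ↦ X p.1 p.2) μ) :
    iIndepFun (fun i ω j ↦ X i j ω) μ := by
  have := h.isProbabilityMeasure
  have hrow : ∀ i, iIndepFun (X i) μ := fun i ↦
    h.precomp (g := Prod.mk i) (Prod.mk_right_injective i)
  have (i : ι) (j : κ) : IsProbabilityMeasure (μ.map (X i j)) :=
    Measure.isProbabilityMeasure_map (hX i j).aemeasurable
  have hrow_law : ∀ i, μ.map (fun ω j ↦ X i j ω) = Measure.infinitePi fun j ↦ μ.map (X i j) :=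
    fun i ↦ (hrow i).map_fun_eq_infinitePi_map (hX i)
  have hlaw : μ.map (fun ω (p : ι × κ) ↦ X p.1 p.2 ω) =
      Measure.infinitePi fun p : ι × κ ↦ μ.map (X p.1 p.2) :=
    h.map_fun_eq_infinitePi_map fun p ↦ hX p.1 p.2
  -- both sides are the law of the uncurried family, pushed forward by currying
  rw [iIndepFun_iff_map_fun_eq_infinitePi_map (fun i ↦ by fun_prop), funext hrow_law,
    ← Measure.infinitePi_map_curry (fun i j ↦ μ.map (X i j)), ← hlaw,
    Measure.map_map (MeasurableEquiv.measurable _) (by fun_prop)]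
  rfl

lemma iIndepFun.iIndepSet_preimage {ι : Type*} {β : ι → Type*} [∀ i, MeasurableSpace (β i)]
    {f : ∀ i, Ω → β i} (h : iIndepFun f μ) {S : ∀ i, Set (β i)}
    (hS : ∀ i, MeasurableSet (S i)) : iIndepSet (fun i ↦ f i ⁻¹' S i) μ := by
  rw [iIndepSet_iff_iIndep]
  refine iIndep_of_iIndep_of_le h.iIndep fun i ↦ ?_
  exact MeasurableSpace.generateFrom_le <| by rintro _ rfl; exact ⟨S i, hS i, rfl⟩

/-- Unlike `meas_ge_le_variance_div_sq`, this allows the radius `r = 0`. -/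
lemma measure_lt_abs_sub_integral_le [IsFiniteMeasure μ] {Y : Ω → ℝ} (hY : MemLp Y 2 μ)
    {r c : ℝ} (hr : 0 ≤ r) (hvar : variance Y μ ≤ c * r ^ 2) :
    μ {ω | r < |Y ω - μ[Y]|} ≤ ENNReal.ofReal c := by
  rcases hr.eq_or_lt with rfl | hr
  · have hvar0 : variance Y μ = 0 := le_antisymm (by simpa using hvar) (variance_nonneg Y μ)
    have hnull : μ {ω | 0 < |Y ω - μ[Y]|} = 0 := by
      refine measure_eq_zero_iff_ae_notMem.2 ?_
      filter_upwards [ae_eq_integral_of_variance_eq_zero hY hvar0] with ω hω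
      simp [hω]
    exact hnull.le.trans zero_le
  calc μ {ω | r < |Y ω - μ[Y]|} ≤ μ {ω | r ≤ |Y ω - μ[Y]|} :=
        measure_mono fun ω (hω : r < _) ↦ hω.le
    _ ≤ ENNReal.ofReal (variance Y μ / r ^ 2) := meas_ge_le_variance_div_sq hY hr
    _ ≤ ENNReal.ofReal c := ENNReal.ofReal_le_ofReal <| by rwa [div_le_iff₀ (by positivity)]

lemma variance_mean_le {n : ℕ} {X : Fin n → Ω → ℝ} (hind : iIndepFun X μ)
    (hX : ∀ i, MemLp (X i) 2 μ) {V : ℝ} (hvar : ∀ i, variance (X i) μ ≤ V) :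
    variance (fun ω ↦ (1 / (n : ℝ)) * ∑ i, X i ω) μ ≤ V / n := by
  have hsum : variance (∑ i, X i) μ = ∑ i, variance (X i) μ :=
    IndepFun.variance_sum (fun i _ ↦ hX i) fun i _ j _ hij ↦ hind.indepFun hij
  calc variance (fun ω ↦ (1 / (n : ℝ)) * ∑ i, X i ω) μ
      = (1 / (n : ℝ)) ^ 2 * ∑ i, variance (X i) μ := by
        rw [← hsum, ← variance_const_mul]
        simp only [Finset.sum_apply]
    _ ≤ (1 / (n : ℝ)) ^ 2 * (n * V) := by
        gcongr
        simpa using Finset.sum_le_sum fun i (_ : i ∈ univ) ↦ hvar i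
    _ = V / n := by
        rcases n.eq_zero_or_pos with rfl | hn
        · simp
        · field_simp

lemma integral_mean {n : ℕ} (hn : 0 < n) {X : Fin n → Ω → ℝ} [IsProbabilityMeasure μ]
    (hX : ∀ i, Integrable (X i) μ) {m : ℝ} (hmean : ∀ i, μ[X i] = m) :
    μ[fun ω ↦ (1 / (n : ℝ)) * ∑ i, X i ω] = m := by
  rw [integral_const_mul, integral_finsetSum _ fun i _ ↦ hX i]
  simp [hmean]
  field_simp

lemma measure_lt_abs_mean_sub_le {n : ℕ} (hn : 0 < n) {X : Fin n → Ω → ℝ}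
    (hind : iIndepFun X μ) (hX : ∀ i, MemLp (X i) 2 μ) {m V r c : ℝ}
    (hmean : ∀ i, μ[X i] = m) (hvar : ∀ i, variance (X i) μ ≤ V) (hr : 0 ≤ r)
    (hVc : V / n ≤ c * r ^ 2) :
    μ {ω | r < |(1 / (n : ℝ)) * ∑ i, X i ω - m|} ≤ ENNReal.ofReal c := by
  have := hind.isProbabilityMeasure
  have hmean_L2 : MemLp (fun ω ↦ (1 / (n : ℝ)) * ∑ i, X i ω) 2 μ :=
    (memLp_finsetSum univ fun i _ ↦ hX i).const_mul _
  have hmean_int : μ[fun ω ↦ (1 / (n : ℝ)) * ∑ i, X i ω] = m :=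
    integral_mean hn (fun i ↦ (hX i).integrable one_le_two) hmean
  simpa only [hmean_int] using measure_lt_abs_sub_integral_le hmean_L2 hr
    ((variance_mean_le hind hX hvar).trans hVc)

lemma mgf_indicator_one {A : Set Ω} (hA : MeasurableSet A) [IsProbabilityMeasure μ] (t : ℝ) :
    mgf (A.indicator 1) μ t = 1 + (Real.exp t - 1) * μ.real A := by
  have hexp : (fun ω ↦ Real.exp (t * A.indicator 1 ω)) =
      fun ω ↦ A.indicator (fun _ ↦ Real.exp t - 1) ω + 1 := by
    ext ω
    by_cases hω : ω ∈ A <;> simp [hω]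
  rw [mgf, hexp, integral_add ((integrable_const _).indicator hA) (integrable_const 1),
    integral_indicator_const _ hA]
  simp [smul_eq_mul, mul_comm, add_comm]

open scoped Classical in
lemma iIndepSet.measureReal_le_card_filter_mem_le {ι : Type*} [Fintype ι] {A : ι → Set Ω}
    (hind : iIndepSet A μ) (hA : ∀ i, MeasurableSet (A i)) {p : ℝ}
    (hp : ∀ i, μ.real (A i) ≤ p) (t : ℝ) :
    μ.real {ω | t ≤ #{i | ω ∈ A i}} ≤
      Real.exp (-t) * (1 + (Real.exp 1 - 1) * p) ^ Fintype.card ι := by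
  have := hind.isProbabilityMeasure
  set Z : ι → Ω → ℝ := fun i ↦ (A i).indicator 1
  have hZ : iIndepFun Z μ := hind.iIndepFun_indicator
  have hZ_meas : ∀ i, Measurable (Z i) := fun i ↦ measurable_const.indicator (hA i)
  have hcount : ∀ ω, (#{i | ω ∈ A i} : ℝ) = (∑ i, Z i) ω := fun ω ↦ by
    simp [Z, Set.indicator_apply, Finset.sum_boole]
  have hZ_exp_int : ∀ i ∈ (univ : Finset ι), Integrable (fun ω ↦ Real.exp (1 * Z i ω)) μ :=
    fun i _ ↦ by
      refine (integrable_const (Real.exp 1)).mono' (by fun_prop) (.of_forall fun ω ↦ ?_)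
      by_cases hω : ω ∈ A i <;> simp [Z, hω, Real.one_le_exp zero_le_one]
  calc μ.real {ω | t ≤ #{i | ω ∈ A i}} = μ.real {ω | t ≤ (∑ i, Z i) ω} := by simp_rw [hcount]
    _ ≤ Real.exp (-1 * t) * mgf (∑ i, Z i) μ 1 :=
        measure_ge_le_exp_mul_mgf t zero_le_one (hZ.integrable_exp_mul_sum hZ_meas hZ_exp_int)
    _ = Real.exp (-t) * ∏ i, (1 + (Real.exp 1 - 1) * μ.real (A i)) := by
        simp [hZ.mgf_sum hZ_meas, Z, mgf_indicator_one (hA _)]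
    _ ≤ Real.exp (-t) * (1 + (Real.exp 1 - 1) * p) ^ Fintype.card ι := by
        have he : 0 ≤ Real.exp 1 - 1 := by linarith [Real.add_one_le_exp 1]
        gcongr
        calc ∏ i, (1 + (Real.exp 1 - 1) * μ.real (A i))
            ≤ ∏ _i : ι, (1 + (Real.exp 1 - 1) * p) :=
              Finset.prod_le_prod (fun i _ ↦ by positivity) fun i _ ↦ by gcongr; exact hp i
          _ = _ := by simp

lemma one_add_exp_one_sub_one_mul_le_exp_one_third :
    1 + (Real.exp 1 - 1) * (2 / 9) ≤ Real.exp (1 / 3) := by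
  set x := Real.exp (1 / 3)
  have hx3 : x ^ 3 = Real.exp 1 := by rw [← Real.exp_nat_mul]; norm_num
  have hx1 : 1 ≤ x := Real.one_le_exp (by norm_num)
  have hx : x ≤ 1.43 := (pow_le_pow_iff_left₀ (by positivity) (by norm_num) three_ne_zero).1 <| by
    rw [hx3]; linarith [Real.exp_one_lt_d9]
  -- `2x³ - 9x + 7 = (x - 1)(2x² + 2x - 7)`, and the second factor is negative for `x ≤ 1.43`
  nlinarith [mul_nonneg (sub_nonneg.2 hx1) (sub_nonneg.2 hx)]

open scoped Classical in
lemma iIndepSet.measureReal_half_le_card_filter_mem_le {ι : Type*} [Fintype ι] {A : ι → Set Ω}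
    (hind : iIndepSet A μ) (hA : ∀ i, MeasurableSet (A i)) (hp : ∀ i, μ.real (A i) ≤ 2 / 9) :
    μ.real {ω | (Fintype.card ι : ℝ) / 2 ≤ #{i | ω ∈ A i}} ≤
      Real.exp (-(Fintype.card ι : ℝ) / 6) := by
  set n := Fintype.card ι
  calc μ.real {ω | (n : ℝ) / 2 ≤ #{i | ω ∈ A i}}
      ≤ Real.exp (-(n / 2)) * (1 + (Real.exp 1 - 1) * (2 / 9)) ^ n :=
        hind.measureReal_le_card_filter_mem_le hA hp _
    _ ≤ Real.exp (-(n / 2)) * Real.exp (1 / 3) ^ n := by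
        gcongr _ * ?_
        exact pow_le_pow_left₀ (by linarith [Real.add_one_le_exp (1 : ℝ)])
          one_add_exp_one_sub_one_mul_le_exp_one_third n
    _ = Real.exp (-n / 6) := by
        rw [← Real.exp_nat_mul, ← Real.exp_add]
        ring_nf

lemma ofReal_one_sub_le_measure_compl [IsProbabilityMeasure μ] {s : Set Ω} {a : ℝ} (ha : 0 ≤ a)
    (hs : μ.real s ≤ a) : ENNReal.ofReal (1 - a) ≤ μ sᶜ :=
  calc ENNReal.ofReal (1 - a) = 1 - ENNReal.ofReal a := by
        rw [ENNReal.ofReal_sub _ ha, ENNReal.ofReal_one]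
    _ ≤ 1 - μ s := by
        gcongr
        exact (ENNReal.le_ofReal_iff_toReal_le (measure_ne_top _ _) ha).2 hs
    _ ≤ μ sᶜ := tsub_le_iff_left.2 (measure_univ (μ := μ) ▸ measure_univ_le_add_compl s)

end ProbabilityTheory

lemma div_le_two_div_nine_mul_sq {ε V : ℝ} (hε : 0 < ε) (hV : 0 ≤ V) {n : ℕ}
    (hn : 9 / ε ^ 2 ≤ n) : V / n ≤ 2 / 9 * (ε / Real.sqrt 2 * Real.sqrt V) ^ 2 := by
  have hεn : 9 ≤ ε ^ 2 * n := by rwa [div_le_iff₀ (by positivity), mul_comm] at hn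
  have hn : (0 : ℝ) < n := by nlinarith
  rw [mul_pow, div_pow, Real.sq_sqrt hV, Real.sq_sqrt zero_le_two, div_le_iff₀ hn]
  nlinarith

lemma le_card_filter_lt_abs_sub_of_median {ι : Type*} [Fintype ι] {y : ι → ℝ} {Y c r : ℝ}
    {k : ℕ} (hle : k ≤ #{i | y i ≤ Y}) (hge : k ≤ #{i | Y ≤ y i}) (hY : r < |Y - c|) :
    k ≤ #{i | r < |y i - c|} := by
  rcases lt_abs.1 hY with hY | hY
  · refine hge.trans (card_le_card fun i hi ↦ ?_)
    simp only [mem_filter, mem_univ, true_and] at hi ⊢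
    exact lt_abs.2 (Or.inl (by linarith))
  · refine hle.trans (card_le_card fun i hi ↦ ?_)
    simp only [mem_filter, mem_univ, true_and] at hi ⊢
    exact lt_abs.2 (Or.inr (by linarith))

theorem stmt1_general {Ω : Type*} [MeasurableSpace Ω] (μ : Measure Ω) [IsProbabilityMeasure μ]
    (ε δ : ℝ) (hε : ε ∈ Set.Ioo (0:ℝ) 1) (hδ : δ ∈ Set.Ioo (0:ℝ) 1)
    (n₀ m : ℕ) (hn₀ : n₀ = ⌈(9:ℝ) / ε ^ 2⌉₊) (hm : m = ⌈(6:ℝ) * Real.log (2 / δ)⌉₊)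
    (μ₀ V : ℝ) (hV : 0 ≤ V)
    (X : Fin m → Fin n₀ → Ω → ℝ)
    (hmeas : ∀ j t, Measurable (X j t))
    (hindep : iIndepFun
      (fun jt : Fin m × Fin n₀ => X jt.1 jt.2) μ)
    (hL2 : ∀ j t, MemLp (X j t) 2 μ)
    (hmean : ∀ j t, ∫ ω, X j t ω ∂μ = μ₀)
    (hvar : ∀ j t, ∫ ω, (X j t ω - μ₀) ^ 2 ∂μ ≤ V)
    (Yg : Fin m → Ω → ℝ) (hYg : ∀ j ω, Yg j ω = (1 / (n₀ : ℝ)) * ∑ t, X j t ω)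
    (Y : Ω → ℝ)
    (hmedle : ∀ ω, ⌈(m : ℝ) / 2⌉₊ ≤ (univ.filter (fun j : Fin m => Yg j ω ≤ Y ω)).card)
    (hmedge : ∀ ω, ⌈(m : ℝ) / 2⌉₊ ≤ (univ.filter (fun j : Fin m => Y ω ≤ Yg j ω)).card) :
    ENNReal.ofReal (1 - δ / 2) ≤
      μ {ω | |Y ω - μ₀| ≤ (ε / Real.sqrt 2) * Real.sqrt V} := by
  classical
  obtain ⟨hε0, -⟩ := hε
  obtain ⟨hδ0, -⟩ := hδ
  obtain rfl : Yg = fun j ω ↦ (1 / (n₀ : ℝ)) * ∑ t, X j t ω := funext fun j ↦ funext (hYg j)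
  set r := ε / Real.sqrt 2 * Real.sqrt V
  set B : Fin m → Set Ω := fun j ω ↦ r < |(1 / (n₀ : ℝ)) * ∑ t, X j t ω - μ₀|
  have hB_meas : ∀ j, MeasurableSet (B j) := fun j ↦
    measurableSet_lt measurable_const (by fun_prop)
  have hB_indep : iIndepSet B μ := by
    have hmeans : iIndepFun (fun j ω ↦ (1 / (n₀ : ℝ)) * ∑ t, X j t ω) μ :=
      (hindep.curry hmeas).comp (fun _ v ↦ (1 / (n₀ : ℝ)) * ∑ t, v t) fun _ ↦ by fun_prop
    exact hmeans.iIndepSet_preimage (S := fun _ ↦ {y | r < |y - μ₀|}) fun _ ↦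
      measurableSet_lt measurable_const (by fun_prop)
  have hB_prob : ∀ j, μ.real (B j) ≤ 2 / 9 := fun j ↦
    ENNReal.toReal_le_of_le_ofReal (by norm_num) <| measure_lt_abs_mean_sub_le
      (hn₀ ▸ Nat.ceil_pos.2 (by positivity))
      (hindep.precomp (g := Prod.mk j) (Prod.mk_right_injective j)) (hL2 j) (hmean j)
      (fun t ↦ by simpa [variance_eq_integral (hmeas j t).aemeasurable, hmean] using hvar j t)
      (by positivity) (div_le_two_div_nine_mul_sq hε0 hV (hn₀ ▸ Nat.le_ceil _))
  set G := {ω | (m : ℝ) / 2 ≤ #{j | ω ∈ B j}}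
  have hG : μ.real G ≤ δ / 2 :=
    calc μ.real G ≤ Real.exp (-(m : ℝ) / 6) := by
          simpa using hB_indep.measureReal_half_le_card_filter_mem_le hB_meas hB_prob
      _ ≤ δ / 2 := by
          rw [← Real.le_log_iff_exp_le (by positivity), ← inv_div 2 δ, Real.log_inv]
          linarith [hm ▸ Nat.le_ceil (6 * Real.log (2 / δ))]
  have hGc : Gᶜ ⊆ {ω | |Y ω - μ₀| ≤ r} := fun ω hω ↦ le_of_not_gt fun hY ↦ hω <|
    calc (m : ℝ) / 2 ≤ ⌈(m : ℝ) / 2⌉₊ := Nat.le_ceil _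
      _ ≤ #{j | ω ∈ B j} := by
        exact_mod_cast le_card_filter_lt_abs_sub_of_median (hmedle ω) (hmedge ω) hY
  exact (ofReal_one_sub_le_measure_compl (by positivity) hG).trans (measure_mono hGc)

/-- median-of-means concentration. With `n₀ = ⌈9/ε²⌉` and
`m = ⌈6 log(2/δ)⌉`, for i.i.d. real random variables `X j t` (for `j ∈ [m]`, `t ∈ [n₀]`)
with mean `μ₀` and variance at most `V`, letting `Y j` be the mean of the `j`-th group
and `Y` a median of the `Y j`'s, we have
`P(|Y − μ₀| ≤ (ε/√2)·√V) ≥ 1 − δ/2`. -/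
theorem stmt1 {Ω : Type*} [MeasurableSpace Ω] (μ : Measure Ω) [IsProbabilityMeasure μ]
    (ε δ : ℝ) (hε : ε ∈ Set.Ioo (0:ℝ) 1) (hδ : δ ∈ Set.Ioo (0:ℝ) 1)
    (n₀ m : ℕ) (hn₀ : n₀ = ⌈(9:ℝ) / ε ^ 2⌉₊) (hm : m = ⌈(6:ℝ) * Real.log (2 / δ)⌉₊)
    (μ₀ V : ℝ) (hV : 0 ≤ V)
    (X : Fin m → Fin n₀ → Ω → ℝ)
    (hmeas : ∀ j t, Measurable (X j t))
    (hindep : iIndepFun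
      (fun jt : Fin m × Fin n₀ => X jt.1 jt.2) μ)
    (hident : ∀ j t j' t', IdentDistrib (X j t) (X j' t') μ μ)
    (hL2 : ∀ j t, MemLp (X j t) 2 μ)
    (hmean : ∀ j t, ∫ ω, X j t ω ∂μ = μ₀)
    (hvar : ∀ j t, ∫ ω, (X j t ω - μ₀) ^ 2 ∂μ ≤ V)
    (Yg : Fin m → Ω → ℝ) (hYg : ∀ j ω, Yg j ω = (1 / (n₀ : ℝ)) * ∑ t, X j t ω)
    (Y : Ω → ℝ)
    (hmedle : ∀ ω, ⌈(m : ℝ) / 2⌉₊ ≤ (univ.filter (fun j : Fin m => Yg j ω ≤ Y ω)).card)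
    (hmedge : ∀ ω, ⌈(m : ℝ) / 2⌉₊ ≤ (univ.filter (fun j : Fin m => Y ω ≤ Yg j ω)).card) :
    ENNReal.ofReal (1 - δ / 2) ≤
      μ {ω | |Y ω - μ₀| ≤ (ε / Real.sqrt 2) * Real.sqrt V} :=
  stmt1_general μ ε δ hε hδ n₀ m hn₀ hm μ₀ V hV X hmeas hindep hL2 hmean hvar Yg hYg Y hmedle hmedge
end

section
/- Let V ∈ ℂ^{n×k} have nonzero columns V_{*,1},…,V_{*,k}, let w ∈ ℂ^k with Vw ≠ 0, and let N = Σ_{i=1}^k |w_i|²‖V_{*,i}‖² (> 0). Consider the following rejection-sampling round: sample i ∈ [k] with probability |w_i|²‖V_{*,i}‖²/N; sample s ∈ [n] with probability |V_{si}|²/‖V_{*,i}‖²; accept and output s with probability r_s = |(Vw)_s|²/(k·Σ_{j=1}^k |V_{sj} w_j|²) (interpreted as 0 when the denominator is 0). Then: (i) r_s ≤ 1 for every s with Σ_j |V_{sj}w_j|² ≠ 0; (ii) for each s ∈ [n], the probability of accepting with output s equals |(Vw)_s|²/(k·N); (iii) the total acceptance probability equals ‖Vw‖²/(k·N) = 1/(k·C(V,w)),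 where C(V,w) = Σ_{i=1}^k ‖w_i V_{*,i}‖²/‖Vw‖²; (iv) conditioned on acceptance, the output s is distributed according to the ℓ²-sampling distribution of Vw. -/
/-!
Proposing `i` with probability `|w_i|²‖V_{*,i}‖²/N` and then `s` with probability
`|V_{si}|²/‖V_{*,i}‖²` yields `s` with probability `D_s/N`, where `D_s = ∑_j |V_{sj} w_j|²`.
Multiplying by the acceptance probability `|(Vw)_s|²/(k D_s)` cancels `D_s` and leaves
`|(Vw)_s|²/(kN)`, which is proportional to the target distribution. Cauchy–Schwarz,
`|(Vw)_s|² = |∑_j V_{sj} w_j|² ≤ k D_s`, shows that the acceptance probability is at most `1`,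
that `D_s = 0` forces `(Vw)_s = 0`, and, summed over `s`, that `‖Vw‖² ≤ kN`.
-/

open Finset

lemma div_mul_div_mul_cancel_of_imp {G₀ : Type*} [CommGroupWithZero G₀] {a b c d : G₀}
    (h : b = 0 → a = 0) : b / c * (a / (d * b)) = a / (d * c) := by
  by_cases hb : b = 0
  · simp [hb, h hb]
  · rw [div_mul_div_comm, mul_comm c, mul_comm d b, mul_assoc, mul_div_mul_left a _ hb]

lemma div_div_div_cancel_right_of_imp {G₀ : Type*} [GroupWithZero G₀] {a b c : G₀}
    (h : c = 0 → b = 0) : a / c / (b / c) = a / b := by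
  by_cases hc : c = 0
  · simp [hc, h hc]
  · exact div_div_div_cancel_right₀ hc a b

namespace Matrix

variable {m n R : Type*} [Fintype n] [SeminormedRing R]

theorem norm_mulVec_apply_sq_le (V : Matrix m n R) (w : n → R) (s : m) :
    ‖(V *ᵥ w) s‖ ^ 2 ≤ Fintype.card n * ∑ j, ‖V s j * w j‖ ^ 2 :=
  calc ‖(V *ᵥ w) s‖ ^ 2 ≤ (∑ j, ‖V s j * w j‖) ^ 2 := by gcongr; exact norm_sum_le _ _
    _ ≤ _ := sq_sum_le_card_mul_sum_sq

variable [NormMulClass R]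

theorem sum_twoStageProb_eq [Fintype m] (V : Matrix m n R) (w : n → R) (N : ℝ) (s : m) :
    ∑ i, ‖w i‖ ^ 2 * (∑ u, ‖V u i‖ ^ 2) / N * (‖V s i‖ ^ 2 / ∑ u, ‖V u i‖ ^ 2) =
      (∑ j, ‖V s j * w j‖ ^ 2) / N := by
  rw [sum_div]
  refine sum_congr rfl fun i _ => ?_
  have hcol : ∑ u, ‖V u i‖ ^ 2 = 0 → ‖V s i‖ ^ 2 = 0 := fun h =>
    (sum_eq_zero_iff_of_nonneg fun _ _ => by positivity).1 h s (mem_univ s)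
  rw [mul_div_right_comm, mul_assoc, mul_div_cancel_of_imp' hcol, norm_mul, mul_pow,
    mul_comm (‖V s i‖ ^ 2), div_mul_eq_mul_div]

variable [Fintype m]

theorem sum_sum_norm_mul_sq (V : Matrix m n R) (w : n → R) :
    ∑ s, ∑ j, ‖V s j * w j‖ ^ 2 = ∑ j, ‖w j‖ ^ 2 * ∑ s, ‖V s j‖ ^ 2 := by
  rw [sum_comm]
  simp_rw [norm_mul, mul_pow, mul_sum, mul_comm]

theorem sum_norm_mulVec_sq_le (V : Matrix m n R) (w : n → R) :
    ∑ s, ‖(V *ᵥ w) s‖ ^ 2 ≤ Fintype.card n * ∑ j, ‖w j‖ ^ 2 * ∑ s, ‖V s j‖ ^ 2 := by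
  rw [← sum_sum_norm_mul_sq, mul_sum]
  exact sum_le_sum fun s _ => V.norm_mulVec_apply_sq_le w s

end Matrix

theorem stmt3_general (n k : ℕ) (V : Matrix (Fin n) (Fin k) ℂ) (w : Fin k → ℂ)
    (N : ℝ) (hN : N = ∑ i, ‖w i‖ ^ 2 * ∑ s, ‖V s i‖ ^ 2)
    (r : Fin n → ℝ)
    (hr : ∀ s, r s = ‖V.mulVec w s‖ ^ 2 / ((k : ℝ) * ∑ j, ‖V s j * w j‖ ^ 2))
    (acc : Fin n → ℝ)
    (hacc : ∀ s, acc s = ∑ i, (‖w i‖ ^ 2 * (∑ u, ‖V u i‖ ^ 2) / N) *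
      (‖V s i‖ ^ 2 / ∑ u, ‖V u i‖ ^ 2) * r s)
    (C : ℝ) (hC : C = (∑ i, ‖w i‖ ^ 2 * ∑ s, ‖V s i‖ ^ 2) / ∑ s, ‖V.mulVec w s‖ ^ 2) :
    (∀ s, (∑ j, ‖V s j * w j‖ ^ 2) ≠ 0 → r s ≤ 1) ∧
    (∀ s, acc s = ‖V.mulVec w s‖ ^ 2 / ((k : ℝ) * N)) ∧
    ((∑ s, acc s) = (∑ s, ‖V.mulVec w s‖ ^ 2) / ((k : ℝ) * N) ∧
      (∑ s, acc s) = 1 / ((k : ℝ) * C)) ∧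
    (∀ s, acc s / ∑ s', acc s' = ‖V.mulVec w s‖ ^ 2 / ∑ s', ‖V.mulVec w s'‖ ^ 2) := by
  have hrow (s) : ‖V.mulVec w s‖ ^ 2 ≤ k * ∑ j, ‖V s j * w j‖ ^ 2 := by
    simpa using V.norm_mulVec_apply_sq_le w s
  have hacc' (s) : acc s = ‖V.mulVec w s‖ ^ 2 / (k * N) := by
    rw [hacc, ← sum_mul, V.sum_twoStageProb_eq, hr]
    exact div_mul_div_mul_cancel_of_imp fun h =>
      le_antisymm ((hrow s).trans_eq (by rw [h, mul_zero])) (by positivity)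
  have htotal : ∑ s, acc s = (∑ s, ‖V.mulVec w s‖ ^ 2) / (k * N) := by
    simp_rw [hacc', sum_div]
  refine ⟨fun s _ => ?_, hacc', ⟨htotal, ?_⟩, fun s => ?_⟩
  · rw [hr]
    exact div_le_one_of_le₀ (hrow s) (by positivity)
  · rw [htotal, hC, ← hN, ← mul_div_assoc, one_div_div]
  · have hsum : ∑ s, ‖V.mulVec w s‖ ^ 2 ≤ k * N := by
      simpa [hN] using V.sum_norm_mulVec_sq_le w
    rw [htotal, hacc']
    exact div_div_div_cancel_right_of_imp fun h => le_antisymm (h ▸ hsum) (by positivity)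

/-- correctness of one rejection-sampling round for `ℓ²`-sampling from `Vw`.
With `P(i) = |w_i|²‖V_{*,i}‖²/N`, `P(s|i) = |V_{si}|²/‖V_{*,i}‖²` and acceptance
probability `r s = |(Vw)_s|² / (k ∑_j |V_{sj} w_j|²)` (interpreted as `0` when the
denominator vanishes, as division by zero is `0` in Lean): (i) `r s ≤ 1` whenever the
denominator is nonzero; (ii) the probability of accepting with output `s` is
`|(Vw)_s|²/(kN)`; (iii) the total acceptance probability is `‖Vw‖²/(kN) = 1/(k C(V,w))`;
(iv) conditioned on acceptance, `s` follows the ℓ²-sampling distribution of `Vw`. -/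
theorem stmt3 (n k : ℕ) (V : Matrix (Fin n) (Fin k) ℂ) (w : Fin k → ℂ)
    (hcols : ∀ i : Fin k, (fun s => V s i) ≠ 0)
    (hVw : V.mulVec w ≠ 0)
    (N : ℝ) (hN : N = ∑ i, ‖w i‖ ^ 2 * ∑ s, ‖V s i‖ ^ 2)
    (r : Fin n → ℝ)
    (hr : ∀ s, r s = ‖V.mulVec w s‖ ^ 2 / ((k : ℝ) * ∑ j, ‖V s j * w j‖ ^ 2))
    (acc : Fin n → ℝ)
    (hacc : ∀ s, acc s = ∑ i, (‖w i‖ ^ 2 * (∑ u, ‖V u i‖ ^ 2) / N) *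
      (‖V s i‖ ^ 2 / ∑ u, ‖V u i‖ ^ 2) * r s)
    (C : ℝ) (hC : C = (∑ i, ‖w i‖ ^ 2 * ∑ s, ‖V s i‖ ^ 2) / ∑ s, ‖V.mulVec w s‖ ^ 2) :
    (∀ s, (∑ j, ‖V s j * w j‖ ^ 2) ≠ 0 → r s ≤ 1) ∧
    (∀ s, acc s = ‖V.mulVec w s‖ ^ 2 / ((k : ℝ) * N)) ∧
    ((∑ s, acc s) = (∑ s, ‖V.mulVec w s‖ ^ 2) / ((k : ℝ) * N) ∧
      (∑ s, acc s) = 1 / ((k : ℝ) * C)) ∧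
    (∀ s, acc s / ∑ s', acc s' = ‖V.mulVec w s‖ ^ 2 / ∑ s', ‖V.mulVec w s'‖ ^ 2) :=
  stmt3_general n k V w N hN r hr acc hacc C hC
end

section
/- Let M ∈ ℂ^{m×d} have nonzero rows and let w ∈ ℝ^m. Define a, b ∈ ℂ^{d·m·m} indexed by triples (i,j,k) ∈ [d]×[m]×[m] via a_{(i,j,k)} = M_{ji}·‖M_{k,*}‖ and b_{(i,j,k)} = w_j w_k M_{ki}/‖M_{k,*}‖. Then ⟨a, b⟩ = w M M† w^T, ‖a‖ = ‖M‖_F · ‖M̃‖ where M̃ ∈ ℝ^m is the vector of row norms M̃_k = ‖M_{k,*}‖ (so ‖a‖ = ‖M‖_F²), and ‖b‖ = ‖w‖². -/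
open Finset Matrix

/-- the flattened-tensor identity. For `M ∈ ℂ^{m×d}` with nonzero rows and
`w ∈ ℝ^m`, defining `a, b ∈ ℂ^{d·m·m}` by `a (i,j,k) = M j i ‖M_{k,*}‖` and
`b (i,j,k) = w j w k M k i / ‖M_{k,*}‖`, we have `⟨a, b⟩ = w M M† wᵀ`,
`‖a‖ = ‖M‖_F ‖M̃‖ = ‖M‖_F²` (where `M̃` is the vector of row norms), and `‖b‖ = ‖w‖²`. -/
theorem stmt5 (m d : ℕ) (M : Matrix (Fin m) (Fin d) ℂ) (hrows : ∀ k : Fin m, M k ≠ 0)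
    (w : Fin m → ℝ)
    (a b : Fin d × Fin m × Fin m → ℂ)
    (ha : ∀ i j k, a (i, j, k) = M j i * ((Real.sqrt (∑ l, ‖M k l‖ ^ 2) : ℝ) : ℂ))
    (hb : ∀ i j k, b (i, j, k) =
      ((w j : ℝ) : ℂ) * ((w k : ℝ) : ℂ) * M k i / ((Real.sqrt (∑ l, ‖M k l‖ ^ 2) : ℝ) : ℂ)) :
    (∑ t, (starRingEnd ℂ) (a t) * b t) =
      Matrix.vecMul (fun i => ((w i : ℝ) : ℂ)) (M * Mᴴ) ⬝ᵥ (fun i => ((w i : ℝ) : ℂ)) ∧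
    Real.sqrt (∑ t, ‖a t‖ ^ 2) =
      Real.sqrt (∑ k, ∑ l, ‖M k l‖ ^ 2) *
        Real.sqrt (∑ k, Real.sqrt (∑ l, ‖M k l‖ ^ 2) ^ 2) ∧
    Real.sqrt (∑ t, ‖a t‖ ^ 2) = Real.sqrt (∑ k, ∑ l, ‖M k l‖ ^ 2) ^ 2 ∧
    Real.sqrt (∑ t, ‖b t‖ ^ 2) = ∑ j, (w j) ^ 2 := by
  set S : Fin m → ℝ := fun k => ∑ l, ‖M k l‖ ^ 2 with hS
  have hSpos : ∀ k, 0 < S k := by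
    intro k
    have : ∃ l, M k l ≠ 0 := by
      by_contra h
      push_neg at h
      exact hrows k (funext h)
    obtain ⟨l, hl⟩ := this
    apply Finset.sum_pos' (fun i _ => by positivity)
    exact ⟨l, Finset.mem_univ l, pow_pos (norm_pos_iff.mpr hl) 2⟩
  have hsq : ∀ k, Real.sqrt (S k) ^ 2 = S k := fun k => Real.sq_sqrt (hSpos k).le
  have hne : ∀ k, ((Real.sqrt (S k) : ℝ) : ℂ) ≠ 0 := by
    intro k
    simp [Complex.ofReal_ne_zero, Real.sqrt_ne_zero', hSpos k]
  have key : ∀ (i : Fin d) (j k : Fin m), (starRingEnd ℂ) (a (i,j,k)) * b (i,j,k)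
      = ((w j : ℝ) : ℂ) * ((w k : ℝ) : ℂ) * ((starRingEnd ℂ) (M j i) * M k i) := by
    intro i j k
    have hc : ∀ (x y : ℂ), (x * ((Real.sqrt (S k) : ℝ) : ℂ)) * (y / ((Real.sqrt (S k) : ℝ) : ℂ)) = x * y := by
      intro x y
      rw [div_eq_mul_inv, mul_mul_mul_comm, mul_inv_cancel₀ (hne k), mul_one]
    rw [ha, hb, _root_.map_mul, Complex.conj_ofReal, hc]
    ring
  refine ⟨?_, ?_, ?_, ?_⟩
  · rw [Fintype.sum_prod_type]
    simp only [Fintype.sum_prod_type, key]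
    simp only [dotProduct, Matrix.vecMul, Matrix.mul_apply, Matrix.conjTranspose_apply,
      Finset.sum_mul, Finset.mul_sum]
    conv_lhs => rw [Finset.sum_comm]
    refine Eq.trans (Finset.sum_congr rfl fun j _ => Finset.sum_comm) ?_
    simp only [starRingEnd_apply]
    refine Finset.sum_congr rfl fun _ _ => Finset.sum_congr rfl fun _ _ =>
      Finset.sum_congr rfl fun _ _ => by ring
  all_goals {
    have hsq' : ∀ k : Fin m, Real.sqrt (∑ l, ‖M k l‖ ^ 2) ^ 2 = S k := hsq
    have hnorm : ∀ (i : Fin d) (j k : Fin m), ‖a (i,j,k)‖^2 = ‖M j i‖^2 * S k := by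
      intro i j k
      rw [ha, norm_mul, mul_pow, Complex.norm_real, Real.norm_eq_abs, sq_abs, hsq']
    have hXnn : 0 ≤ ∑ k, S k := Finset.sum_nonneg fun k _ => (hSpos k).le
    have hA : ∑ t, ‖a t‖^2 = (∑ k, S k) * (∑ k, S k) := by
      rw [Fintype.sum_prod_type]
      simp only [Fintype.sum_prod_type, hnorm]
      simp only [← Finset.mul_sum, ← Finset.sum_mul]
      rw [Finset.sum_comm]
    have hbnorm : ∀ (i : Fin d) (j k : Fin m),
        ‖b (i,j,k)‖^2 = (w j)^2 * (w k)^2 * ‖M k i‖^2 / S k := by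
      intro i j k
      rw [hb, norm_div, norm_mul, norm_mul, Complex.norm_real, Complex.norm_real,
        Complex.norm_real, div_pow, mul_pow, mul_pow, Real.norm_eq_abs, Real.norm_eq_abs,
        Real.norm_eq_abs, sq_abs, sq_abs, sq_abs, hsq']
    have hwnn : 0 ≤ ∑ j, (w j)^2 := Finset.sum_nonneg fun j _ => sq_nonneg _
    have hB : ∑ t, ‖b t‖^2 = (∑ j, (w j)^2) * (∑ j, (w j)^2) := by
      rw [Fintype.sum_prod_type]
      simp only [Fintype.sum_prod_type, hbnorm]
      rw [Finset.sum_comm]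
      refine Eq.trans (Finset.sum_congr rfl fun j _ => Finset.sum_comm) ?_
      have hin : ∀ (j k : Fin m), (∑ i, (w j)^2 * (w k)^2 * ‖M k i‖^2 / S k)
          = (w j)^2 * (w k)^2 := by
        intro j k
        rw [← Finset.sum_div, ← Finset.mul_sum]
        have hSk : (∑ i, ‖M k i‖^2) = S k := rfl
        rw [hSk, mul_div_assoc, div_self (hSpos k).ne', mul_one]
      simp only [hin]
      rw [← Finset.sum_mul_sum]
    first
    | (rw [hA, Real.sqrt_mul hXnn]; simp only [hsq'])
    | (rw [hA, Real.sqrt_mul hXnn, ← pow_two])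
    | (rw [hB, Real.sqrt_mul_self hwnn]) }
end

section
/- Let A ∈ ℂ^{m×n} be nonzero, let q ≥ 1, and let S ∈ ℂ^{q×n} be the random matrix whose q rows are drawn i.i.d. by sampling an index i with probability ‖A_{i,*}‖²/‖A‖_F² and taking the rescaled row (‖A‖_F/(√q·‖A_{i,*}‖))·A_{i,*}. Then E[‖S†S − A†A‖_F²] ≤ ‖A‖_F⁴/q. -/
open MeasureTheory ProbabilityTheory Finset Matrix

open scoped ENNReal

/-!
Row `r` of `S` contributes the rank-one matrix `s_r† s_r` to `S†S`, and these are i.i.d.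
copies of a random matrix whose mean is `A†A / q` (the sampling probability
`‖A_i‖² / ‖A‖_F²` cancels the rescaling `‖A‖_F² / (q ‖A_i‖²)`) and whose Frobenius norm is
at most `‖A‖_F² / q`. Entrywise, the variance of a sum of independent variables is the sum
of the variances, each bounded by the second moment; summing over entries and rows gives
`q (‖A‖_F² / q)² = ‖A‖_F⁴ / q`.
-/

section DiscreteRandomVariables

variable {Ω α : Type*} [MeasurableSpace Ω] {μ : Measure Ω} [IsFiniteMeasure μ]
  [MeasurableSpace α] [DiscreteMeasurableSpace α]

lemma memLp_comp_of_finite [Finite α] {E : Type*} [NormedAddCommGroup E] {X : Ω → α}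
    (hX : Measurable X) (g : α → E) (p : ℝ≥0∞) : MemLp (fun ω => g (X ω)) p μ :=
  (memLp_map_measure_iff StronglyMeasurable.of_discrete.aestronglyMeasurable
    hX.aemeasurable).1 MemLp.of_discrete

lemma integral_comp_eq_sum_measureReal_preimage {E : Type*} [NormedAddCommGroup E]
    [NormedSpace ℝ E] [CompleteSpace E] [Fintype α] {X : Ω → α} (hX : Measurable X) (g : α → E) :
    ∫ ω, g (X ω) ∂μ = ∑ a, μ.real (X ⁻¹' {a}) • g a := by
  rw [← integral_map hX.aemeasurable StronglyMeasurable.of_discrete.aestronglyMeasurable,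
    integral_fintype .of_finite]
  simp only [map_measureReal_apply hX (measurableSet_singleton _)]

end DiscreteRandomVariables

section IndependentSums

variable {Ω ι : Type*} [MeasurableSpace Ω] {μ : Measure Ω} [IsProbabilityMeasure μ]

lemma integral_sq_sum_sub_sum_integral_le {X : ι → Ω → ℝ} {s : Finset ι}
    (hX : ∀ i ∈ s, MemLp (X i) 2 μ) (hindep : Set.Pairwise s fun i j => X i ⟂ᵢ[μ] X j) :
    ∫ ω, (∑ i ∈ s, X i ω - ∑ i ∈ s, μ[X i]) ^ 2 ∂μ ≤ ∑ i ∈ s, ∫ ω, X i ω ^ 2 ∂μ := by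
  calc ∫ ω, (∑ i ∈ s, X i ω - ∑ i ∈ s, μ[X i]) ^ 2 ∂μ = Var[∑ i ∈ s, X i; μ] := by
        rw [variance_eq_integral (memLp_finsetSum' s hX).aemeasurable]
        simp only [Finset.sum_apply]
        rw [integral_finsetSum s fun i hi => (hX i hi).integrable one_le_two]
    _ = ∑ i ∈ s, Var[X i; μ] := IndepFun.variance_sum hX hindep
    _ ≤ ∑ i ∈ s, ∫ ω, X i ω ^ 2 ∂μ :=
        sum_le_sum fun i hi => variance_le_expectation_sq (hX i hi).1

lemma integral_norm_sq_sum_sub_sum_integral_le {𝕜 : Type*} [RCLike 𝕜] {Z : ι → Ω → 𝕜}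
    {s : Finset ι} (hZ : ∀ i ∈ s, MemLp (Z i) 2 μ)
    (hindep : Set.Pairwise s fun i j => Z i ⟂ᵢ[μ] Z j) :
    ∫ ω, ‖∑ i ∈ s, Z i ω - ∑ i ∈ s, μ[Z i]‖ ^ 2 ∂μ ≤ ∑ i ∈ s, ∫ ω, ‖Z i ω‖ ^ 2 ∂μ := by
  set X : ι → Ω → ℝ := fun i ω => RCLike.re (K := 𝕜) (Z i ω)
  set Y : ι → Ω → ℝ := fun i ω => RCLike.im (K := 𝕜) (Z i ω)
  have hX : ∀ i ∈ s, MemLp (X i) 2 μ := fun i hi => (hZ i hi).re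
  have hY : ∀ i ∈ s, MemLp (Y i) 2 μ := fun i hi => (hZ i hi).im
  have hre : ∀ i ∈ s, μ[X i] = RCLike.re μ[Z i] := fun i hi =>
    integral_re ((hZ i hi).integrable one_le_two)
  have him : ∀ i ∈ s, μ[Y i] = RCLike.im μ[Z i] := fun i hi =>
    integral_im ((hZ i hi).integrable one_le_two)
  have hsplit : ∀ ω, ‖∑ i ∈ s, Z i ω - ∑ i ∈ s, μ[Z i]‖ ^ 2 =
      (∑ i ∈ s, X i ω - ∑ i ∈ s, μ[X i]) ^ 2 + (∑ i ∈ s, Y i ω - ∑ i ∈ s, μ[Y i]) ^ 2 := by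
    intro ω
    rw [RCLike.norm_sq_eq_def, sum_congr rfl hre, sum_congr rfl him]
    simp [X, Y, sq]
  have hnorm : ∀ i ω, ‖Z i ω‖ ^ 2 = X i ω ^ 2 + Y i ω ^ 2 := fun i ω => by
    rw [RCLike.norm_sq_eq_def]
    ring
  have hXind : Set.Pairwise s fun i j => X i ⟂ᵢ[μ] X j := fun i hi j hj hij =>
    (hindep hi hj hij).comp RCLike.continuous_re.measurable RCLike.continuous_re.measurable
  have hYind : Set.Pairwise s fun i j => Y i ⟂ᵢ[μ] Y j := fun i hi j hj hij =>
    (hindep hi hj hij).comp RCLike.continuous_im.measurable RCLike.continuous_im.measurable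
  have hdev : ∀ W : ι → Ω → ℝ, (∀ i ∈ s, MemLp (W i) 2 μ) → ∀ c,
      Integrable (fun ω => (∑ i ∈ s, W i ω - c) ^ 2) μ := fun W hW c =>
    ((memLp_finsetSum s hW).sub (memLp_const c)).integrable_sq
  simp_rw [hsplit, hnorm]
  rw [integral_add (hdev X hX _) (hdev Y hY _),
    sum_congr rfl fun i hi => integral_add (hX i hi).integrable_sq (hY i hi).integrable_sq,
    sum_add_distrib]
  exact add_le_add (integral_sq_sum_sub_sum_integral_le hX hXind)
    (integral_sq_sum_sub_sum_integral_le hY hYind)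

lemma integral_frobenius_sq_sum_comp_sub_le {α κ κ' : Type*} [MeasurableSpace α]
    [DiscreteMeasurableSpace α] [Finite α] [Fintype κ] [Fintype κ']
    {X : ι → Ω → α} (hX : ∀ r, Measurable (X r)) (hindep : iIndepFun X μ) (s : Finset ι)
    (W : α → Matrix κ κ' ℂ) :
    ∫ ω, ∑ c, ∑ c', ‖∑ r ∈ s, W (X r ω) c c' - ∑ r ∈ s, ∫ ω, W (X r ω) c c' ∂μ‖ ^ 2 ∂μ ≤
      ∑ r ∈ s, ∫ ω, ∑ c, ∑ c', ‖W (X r ω) c c'‖ ^ 2 ∂μ := by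
  have hmem : ∀ r c c', MemLp (fun ω => W (X r ω) c c') 2 μ := fun r c c' =>
    memLp_comp_of_finite (hX r) (fun a => W a c c') 2
  have hint : ∀ r c c', Integrable (fun ω => ‖W (X r ω) c c'‖ ^ 2) μ := fun r c c' =>
    (hmem r c c').norm.integrable_sq
  have hdev : ∀ c c', Integrable
      (fun ω => ‖∑ r ∈ s, W (X r ω) c c' - ∑ r ∈ s, ∫ ω, W (X r ω) c c' ∂μ‖ ^ 2) μ :=
    fun c c' => ((memLp_finsetSum s fun r _ => hmem r c c').sub (memLp_const _)).norm.integrable_sq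
  have hentry : ∀ c c',
      ∫ ω, ‖∑ r ∈ s, W (X r ω) c c' - ∑ r ∈ s, ∫ ω, W (X r ω) c c' ∂μ‖ ^ 2 ∂μ ≤
        ∑ r ∈ s, ∫ ω, ‖W (X r ω) c c'‖ ^ 2 ∂μ := fun c c' =>
    integral_norm_sq_sum_sub_sum_integral_le (fun r _ => hmem r c c') fun r _ r' _ hrr' =>
      (hindep.indepFun hrr').comp (measurable_of_countable fun a => W a c c')
        (measurable_of_countable fun a => W a c c')
  calc ∫ ω, ∑ c, ∑ c', ‖∑ r ∈ s, W (X r ω) c c' - ∑ r ∈ s, ∫ ω, W (X r ω) c c' ∂μ‖ ^ 2 ∂μ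
      = ∑ c, ∑ c', ∫ ω, ‖∑ r ∈ s, W (X r ω) c c' - ∑ r ∈ s, ∫ ω, W (X r ω) c c' ∂μ‖ ^ 2 ∂μ := by
        rw [integral_finsetSum _ fun c _ => integrable_finsetSum _ fun c' _ => hdev c c']
        exact sum_congr rfl fun c _ => integral_finsetSum _ fun c' _ => hdev c c'
    _ ≤ ∑ c, ∑ c', ∑ r ∈ s, ∫ ω, ‖W (X r ω) c c'‖ ^ 2 ∂μ :=
        sum_le_sum fun c _ => sum_le_sum fun c' _ => hentry c c'
    _ = ∑ r ∈ s, ∑ c, ∑ c', ∫ ω, ‖W (X r ω) c c'‖ ^ 2 ∂μ :=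
        (sum_congr rfl fun c _ => sum_comm).trans sum_comm
    _ = ∑ r ∈ s, ∫ ω, ∑ c, ∑ c', ‖W (X r ω) c c'‖ ^ 2 ∂μ := by
        refine sum_congr rfl fun r _ => ?_
        rw [integral_finsetSum _ fun c _ => integrable_finsetSum _ fun c' _ => hint r c c']
        exact sum_congr rfl fun c _ => (integral_finsetSum _ fun c' _ => hint r c c').symm

end IndependentSums

lemma Matrix.conjTranspose_mul_self_eq_sum_vecMulVec {m n α : Type*} [Fintype m]
    [NonUnitalSemiring α] [StarRing α] (B : Matrix m n α) :
    Bᴴ * B = ∑ i, vecMulVec (star (B i)) (B i) := by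
  ext c c'
  simp [mul_apply, sum_apply, vecMulVec_apply]

lemma Matrix.sum_sum_norm_sq_vecMulVec {m n 𝕜 : Type*} [Fintype m] [Fintype n]
    [NormedDivisionRing 𝕜] (w : m → 𝕜) (v : n → 𝕜) :
    ∑ c, ∑ c', ‖vecMulVec w v c c'‖ ^ 2 = (∑ c, ‖w c‖ ^ 2) * ∑ c', ‖v c'‖ ^ 2 := by
  simp only [vecMulVec_apply, norm_mul, mul_pow, sum_mul_sum]

noncomputable section LengthSquaredSampling

variable {m n : Type*} [Fintype n]

def rowNormSq (A : Matrix m n ℂ) (i : m) : ℝ := ∑ j, ‖A i j‖ ^ 2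

lemma rowNormSq_nonneg (A : Matrix m n ℂ) (i : m) : 0 ≤ rowNormSq A i :=
  sum_nonneg fun j _ => sq_nonneg ‖A i j‖

lemma row_eq_zero_of_rowNormSq_eq_zero {A : Matrix m n ℂ} {i : m} (h : rowNormSq A i = 0) :
    A i = 0 := by
  funext j
  simpa using (sum_eq_zero_iff_of_nonneg fun j _ => sq_nonneg ‖A i j‖).1 h j (mem_univ j)

variable [Fintype m]

def frobNormSq (A : Matrix m n ℂ) : ℝ := ∑ i, ∑ j, ‖A i j‖ ^ 2

def rowProb (A : Matrix m n ℂ) (i : m) : ℝ := rowNormSq A i / frobNormSq A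

/-- On a zero row the division by zero makes the scale `0`; such a row has probability `0`. -/
def rowScale (q : ℕ) (A : Matrix m n ℂ) (i : m) : ℝ :=
  √(frobNormSq A) / (√q * √(rowNormSq A i))

def sampledRow (q : ℕ) (A : Matrix m n ℂ) (i : m) : n → ℂ :=
  fun c => (rowScale q A i : ℂ) * A i c

/-- In the theorem, `S†S = ∑ r, sampledOuter q A (idx r)`. -/
def sampledOuter (q : ℕ) (A : Matrix m n ℂ) (i : m) : Matrix n n ℂ :=
  vecMulVec (star (sampledRow q A i)) (sampledRow q A i)

variable (q : ℕ) {A : Matrix m n ℂ} {i : m}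

lemma rowNormSq_le_frobNormSq : rowNormSq A i ≤ frobNormSq A :=
  single_le_sum (f := rowNormSq A) (fun i _ => rowNormSq_nonneg A i) (mem_univ i)

lemma frobNormSq_nonneg : 0 ≤ frobNormSq A :=
  sum_nonneg fun i _ => rowNormSq_nonneg A i

lemma rowProb_nonneg : 0 ≤ rowProb A i :=
  div_nonneg (rowNormSq_nonneg A i) frobNormSq_nonneg

lemma rowScale_sq_mul_rowNormSq (h : rowNormSq A i ≠ 0) :
    rowScale q A i ^ 2 * rowNormSq A i = frobNormSq A / q := by
  rw [rowScale, div_pow, mul_pow, Real.sq_sqrt frobNormSq_nonneg,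
    Real.sq_sqrt (Nat.cast_nonneg q), Real.sq_sqrt (rowNormSq_nonneg A i)]
  field_simp

lemma rowProb_mul_rowScale_sq (h : rowNormSq A i ≠ 0) :
    rowProb A i * rowScale q A i ^ 2 = (q : ℝ)⁻¹ := by
  have hF : frobNormSq A ≠ 0 :=
    (((rowNormSq_nonneg A i).lt_of_ne' h).trans_le rowNormSq_le_frobNormSq).ne'
  rw [rowProb, div_mul_eq_mul_div, mul_comm, rowScale_sq_mul_rowNormSq q h]
  field_simp

lemma sampledOuter_eq_smul :
    sampledOuter q A i = (rowScale q A i ^ 2) • vecMulVec (star (A i)) (A i) := by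
  ext c c'
  simp only [sampledOuter, sampledRow, vecMulVec_apply, Pi.star_apply, star_mul',
    RCLike.star_def, Complex.conj_ofReal, Matrix.smul_apply, Complex.real_smul,
    Complex.ofReal_pow]
  ring

lemma sum_norm_sq_sampledRow_le : ∑ c, ‖sampledRow q A i c‖ ^ 2 ≤ frobNormSq A / q := by
  have hrow : ∑ c, ‖sampledRow q A i c‖ ^ 2 = rowScale q A i ^ 2 * rowNormSq A i := by
    simp only [sampledRow, norm_mul, Complex.norm_real, mul_pow, ← mul_sum, rowNormSq,
      Real.norm_eq_abs, sq_abs]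
  rw [hrow]
  by_cases h : rowNormSq A i = 0
  · rw [h, mul_zero]
    exact div_nonneg frobNormSq_nonneg (Nat.cast_nonneg q)
  · exact (rowScale_sq_mul_rowNormSq q h).le

lemma sum_sum_norm_sq_sampledOuter_le :
    ∑ c, ∑ c', ‖sampledOuter q A i c c'‖ ^ 2 ≤ (frobNormSq A / q) ^ 2 := by
  rw [sampledOuter, sum_sum_norm_sq_vecMulVec]
  simp only [Pi.star_apply, norm_star, ← sq]
  exact pow_le_pow_left₀ (by positivity) (sum_norm_sq_sampledRow_le q) 2

lemma sum_rowProb_smul_sampledOuter :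
    ∑ i, rowProb A i • sampledOuter q A i = (q : ℝ)⁻¹ • (Aᴴ * A) := by
  rw [conjTranspose_mul_self_eq_sum_vecMulVec, smul_sum]
  refine sum_congr rfl fun i _ => ?_
  by_cases h : rowNormSq A i = 0
  · simp [sampledOuter_eq_smul, row_eq_zero_of_rowNormSq_eq_zero h]
  · rw [sampledOuter_eq_smul, smul_smul, rowProb_mul_rowScale_sq q h]

lemma integral_sampledOuter_apply {Ω : Type*} [MeasurableSpace Ω] {μ : Measure Ω}
    [IsFiniteMeasure μ] [MeasurableSpace m] [DiscreteMeasurableSpace m]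
    {X : Ω → m} (hX : Measurable X)
    (hlaw : ∀ i, μ (X ⁻¹' {i}) = ENNReal.ofReal (rowProb A i)) (c c' : n) :
    ∫ ω, sampledOuter q A (X ω) c c' ∂μ = (q : ℝ)⁻¹ • (Aᴴ * A) c c' := by
  rw [integral_comp_eq_sum_measureReal_preimage hX fun i => sampledOuter q A i c c',
    ← Matrix.smul_apply, ← sum_rowProb_smul_sampledOuter q, Matrix.sum_apply]
  refine sum_congr rfl fun i _ => ?_
  rw [measureReal_def, hlaw, ENNReal.toReal_ofReal rowProb_nonneg]
  rfl

end LengthSquaredSampling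

theorem stmt8_general {Ω : Type*} [MeasurableSpace Ω] (μ : Measure Ω) [IsProbabilityMeasure μ]
    (m n q : ℕ) (hq : 1 ≤ q)
    (A : Matrix (Fin m) (Fin n) ℂ)
    (idx : Fin q → Ω → Fin m)
    (hmeas : ∀ r, Measurable (idx r))
    (hindep : iIndepFun idx μ)
    (hdist : ∀ r (i : Fin m),
      μ (idx r ⁻¹' {i}) = ENNReal.ofReal ((∑ j, ‖A i j‖ ^ 2) / ∑ i', ∑ j, ‖A i' j‖ ^ 2))
    (S : Ω → Matrix (Fin q) (Fin n) ℂ)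
    (hS : ∀ ω r c, S ω r c =
      ((Real.sqrt (∑ i', ∑ j, ‖A i' j‖ ^ 2) /
        (Real.sqrt q * Real.sqrt (∑ j, ‖A (idx r ω) j‖ ^ 2)) : ℝ) : ℂ) * A (idx r ω) c) :
    (∫ ω, ∑ c, ∑ c', ‖((S ω)ᴴ * S ω - Aᴴ * A) c c'‖ ^ 2 ∂μ) ≤
      (∑ i', ∑ j, ‖A i' j‖ ^ 2) ^ 2 / q := by
  have hq0 : (q : ℝ) ≠ 0 := Nat.cast_ne_zero.2 (by omega)
  have hmean : ∀ c c', ∑ r, ∫ ω, sampledOuter q A (idx r ω) c c' ∂μ = (Aᴴ * A) c c' := by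
    intro c c'
    simp only [integral_sampledOuter_apply q (hmeas _) (hdist _), sum_const, card_univ,
      Fintype.card_fin]
    rw [← Nat.cast_smul_eq_nsmul ℝ, smul_smul, mul_inv_cancel₀ hq0, one_smul]
  have herr : ∀ ω c c', ((S ω)ᴴ * S ω - Aᴴ * A) c c' =
      ∑ r, sampledOuter q A (idx r ω) c c' - ∑ r, ∫ ω, sampledOuter q A (idx r ω) c c' ∂μ := by
    intro ω c c'
    have hrow : ∀ r, S ω r = sampledRow q A (idx r ω) := fun r => funext (hS ω r)
    rw [hmean, Matrix.sub_apply, conjTranspose_mul_self_eq_sum_vecMulVec, Matrix.sum_apply]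
    simp only [hrow, sampledOuter]
  have hbound : ∀ r, ∫ ω, ∑ c, ∑ c', ‖sampledOuter q A (idx r ω) c c'‖ ^ 2 ∂μ ≤
      (frobNormSq A / q) ^ 2 := fun r =>
    (integral_mono_of_nonneg (ae_of_all _ fun ω => by positivity) (integrable_const _)
      (ae_of_all _ fun ω => sum_sum_norm_sq_sampledOuter_le q)).trans_eq (by simp)
  simp_rw [herr]
  calc _ ≤ ∑ r, ∫ ω, ∑ c, ∑ c', ‖sampledOuter q A (idx r ω) c c'‖ ^ 2 ∂μ :=
        integral_frobenius_sq_sum_comp_sub_le hmeas hindep univ (sampledOuter q A)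
    _ ≤ ∑ _r : Fin q, (frobNormSq A / q) ^ 2 := sum_le_sum fun r _ => hbound r
    _ = frobNormSq A ^ 2 / q := by
        simp only [sum_const, card_univ, Fintype.card_fin, nsmul_eq_mul]
        field_simp

/-- variance bound for the FKV row-sketch. For nonzero `A ∈ ℂ^{m×n}` and
the random matrix `S ∈ ℂ^{q×n}` whose `q` rows are i.i.d. rescaled ℓ²-sampled rows of
`A`, we have `E[‖S†S − A†A‖_F²] ≤ ‖A‖_F⁴/q`. -/
theorem stmt8 {Ω : Type*} [MeasurableSpace Ω] (μ : Measure Ω) [IsProbabilityMeasure μ]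
    (m n q : ℕ) (hq : 1 ≤ q)
    (A : Matrix (Fin m) (Fin n) ℂ) (hA : A ≠ 0)
    (idx : Fin q → Ω → Fin m)
    (hmeas : ∀ r, Measurable (idx r))
    (hindep : iIndepFun idx μ)
    (hdist : ∀ r (i : Fin m),
      μ (idx r ⁻¹' {i}) = ENNReal.ofReal ((∑ j, ‖A i j‖ ^ 2) / ∑ i', ∑ j, ‖A i' j‖ ^ 2))
    (S : Ω → Matrix (Fin q) (Fin n) ℂ)
    (hS : ∀ ω r c, S ω r c =
      ((Real.sqrt (∑ i', ∑ j, ‖A i' j‖ ^ 2) /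
        (Real.sqrt q * Real.sqrt (∑ j, ‖A (idx r ω) j‖ ^ 2)) : ℝ) : ℂ) * A (idx r ω) c) :
    (∫ ω, ∑ c, ∑ c', ‖((S ω)ᴴ * S ω - Aᴴ * A) c c'‖ ^ 2 ∂μ) ≤
      (∑ i', ∑ j, ‖A i' j‖ ^ 2) ^ 2 / q :=
  stmt8_general μ m n q hq A idx hmeas hindep hdist S hS
end

section
/- (Hoffman–Wielandt inequality for Hermitian matrices.) Let A, B ∈ ℂ^{n×n} be Hermitian matrices, and let λ_1(A) ≥ … ≥ λ_n(A) and λ_1(B) ≥ … ≥ λ_n(B) be their eigenvalues listed in nonincreasing order (with multiplicity). Then Σ_{i=1}^n (λ_i(A) − λ_i(B))² ≤ ‖A − B‖_F². -/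
/-!
Put `V = Uᴴ W`, a unitary matrix. Then `A - B = U (D_α V - V D_β) Wᴴ`, and since the Frobenius
norm is unitarily invariant, `‖A - B‖_F² = ∑ᵢⱼ |Vᵢⱼ|² (αᵢ - βⱼ)²`. The matrix `(|Vᵢⱼ|²)` is doubly
stochastic, so by Birkhoff's theorem this expression, linear in it, is at least its minimum over
permutation matrices, `∑ᵢ (αᵢ - β_{σ i})²`; the rearrangement inequality bounds that from below
by `∑ᵢ (αᵢ - βᵢ)²`.
-/

open Finset Matrix

variable {n : Type*} [Fintype n]

theorem Monovary.sum_sq_sub_le_sum_sq_sub_comp_perm {a b : n → ℝ} (h : Monovary a b)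
    (σ : Equiv.Perm n) : ∑ i, (a i - b i) ^ 2 ≤ ∑ i, (a i - b (σ i)) ^ 2 := by
  have expand (g : n → ℝ) :
      ∑ i, (a i - g i) ^ 2 = ∑ i, a i ^ 2 - 2 * ∑ i, a i * g i + ∑ i, g i ^ 2 := by
    simp only [sub_sq, sum_add_distrib, sum_sub_distrib, mul_sum, mul_assoc]
  rw [expand, expand fun i => b (σ i), Equiv.sum_comp σ fun i => b i ^ 2]
  linarith [h.sum_mul_comp_perm_le_sum_mul (σ := σ)]

theorem sum_permMatrix_mul [DecidableEq n] {R : Type*} [NonAssocSemiring R] (σ : Equiv.Perm n)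
    (f : n → n → R) : ∑ i, ∑ j, σ.permMatrix R i j * f i j = ∑ i, f i (σ i) := by
  simp [PEquiv.toMatrix_apply, Equiv.toPEquiv_apply]

theorem le_sum_mul_of_mem_doublyStochastic [DecidableEq n] {R : Type*} [Field R] [LinearOrder R]
    [IsStrictOrderedRing R] {S : Matrix n n R} (hS : S ∈ doublyStochastic R n) {f : n → n → R}
    {c : R} (h : ∀ σ : Equiv.Perm n, c ≤ ∑ i, f i (σ i)) :
    c ≤ ∑ i, ∑ j, S i j * f i j := by
  have hconv : Convex R {S : Matrix n n R | c ≤ ∑ i, ∑ j, S i j * f i j} :=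
    convex_halfSpace_ge ⟨fun S T => by simp [add_mul, sum_add_distrib],
      fun a S => by simp [mul_assoc, mul_sum]⟩ c
  rw [← SetLike.mem_coe, doublyStochastic_eq_convexHull_permMatrix] at hS
  refine convexHull_min ?_ hconv hS
  rintro _ ⟨σ, rfl⟩
  simpa [sum_permMatrix_mul] using h σ

variable {𝕜 : Type*} [RCLike 𝕜]

theorem trace_conjTranspose_mul_self_eq_sum_norm_sq {m : Type*} [Fintype m] (M : Matrix m n 𝕜) :
    (Mᴴ * M).trace = ((∑ i, ∑ j, ‖M i j‖ ^ 2 : ℝ) : 𝕜) := by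
  simp only [trace, Matrix.diag, mul_apply, conjTranspose_apply, RCLike.star_def, RCLike.conj_mul]
  push_cast
  exact sum_comm

variable [DecidableEq n]

theorem sum_norm_sq_unitary_mul {m : Type*} [Fintype m] {U : Matrix n n 𝕜}
    (hU : U ∈ unitaryGroup n 𝕜) (M : Matrix n m 𝕜) :
    ∑ i, ∑ j, ‖(U * M) i j‖ ^ 2 = ∑ i, ∑ j, ‖M i j‖ ^ 2 := by
  apply RCLike.ofReal_injective (K := 𝕜)
  rw [← trace_conjTranspose_mul_self_eq_sum_norm_sq, ← trace_conjTranspose_mul_self_eq_sum_norm_sq,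
    conjTranspose_mul, Matrix.mul_assoc, ← Matrix.mul_assoc Uᴴ, ← star_eq_conjTranspose,
    Unitary.star_mul_self_of_mem hU, Matrix.one_mul]

theorem sum_norm_sq_mul_unitary {m : Type*} [Fintype m] {U : Matrix n n 𝕜}
    (hU : U ∈ unitaryGroup n 𝕜) (M : Matrix m n 𝕜) :
    ∑ i, ∑ j, ‖(M * U) i j‖ ^ 2 = ∑ i, ∑ j, ‖M i j‖ ^ 2 := by
  apply RCLike.ofReal_injective (K := 𝕜)
  rw [← trace_conjTranspose_mul_self_eq_sum_norm_sq, ← trace_conjTranspose_mul_self_eq_sum_norm_sq,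
    conjTranspose_mul, Matrix.mul_assoc, trace_mul_comm, Matrix.mul_assoc, Matrix.mul_assoc M,
    ← star_eq_conjTranspose, Unitary.mul_star_self_of_mem hU, Matrix.mul_one]

theorem norm_sq_mem_doublyStochastic {V : Matrix n n 𝕜} (hV : V ∈ unitaryGroup n 𝕜) :
    Matrix.of (fun i j => ‖V i j‖ ^ 2) ∈ doublyStochastic ℝ n := by
  refine mem_doublyStochastic_iff_sum.2 ⟨fun i j => by simp only [of_apply]; positivity,
    fun i => RCLike.ofReal_injective (K := 𝕜) ?_, fun j => RCLike.ofReal_injective (K := 𝕜) ?_⟩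
  · have hii := congrArg (fun M : Matrix n n 𝕜 => M i i) (Unitary.mul_star_self_of_mem hV)
    simp only [mul_apply, star_apply, one_apply_eq, RCLike.star_def, RCLike.mul_conj] at hii
    push_cast [of_apply]
    exact hii
  · have hjj := congrArg (fun M : Matrix n n 𝕜 => M j j) (Unitary.star_mul_self_of_mem hV)
    simp only [mul_apply, star_apply, one_apply_eq, RCLike.star_def, RCLike.conj_mul] at hjj
    push_cast [of_apply]
    exact hjj

theorem diagonal_mul_sub_mul_diagonal_apply (a b : n → 𝕜) (V : Matrix n n 𝕜) (i j : n) :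
    (diagonal a * V - V * diagonal b) i j = (a i - b j) * V i j := by
  simp only [Matrix.sub_apply, diagonal_mul, mul_diagonal]
  ring

/-- Hoffman–Wielandt inequality for Hermitian matrices. If
`A = U diag(α) U†` and `B = W diag(β) W†` with `U, W` unitary and `α, β : Fin n → ℝ`
nonincreasing (so `α`, `β` list the eigenvalues of the Hermitian matrices `A`, `B` in
nonincreasing order with multiplicity), then `∑ i, (α i − β i)² ≤ ‖A − B‖_F²`. -/
theorem stmt10 (n : ℕ) (A B U W : Matrix (Fin n) (Fin n) ℂ)
    (hU : U ∈ Matrix.unitaryGroup (Fin n) ℂ) (hW : W ∈ Matrix.unitaryGroup (Fin n) ℂ)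
    (α β : Fin n → ℝ) (hα : Antitone α) (hβ : Antitone β)
    (hA : A = U * Matrix.diagonal (fun i => ((α i : ℝ) : ℂ)) * Uᴴ)
    (hB : B = W * Matrix.diagonal (fun i => ((β i : ℝ) : ℂ)) * Wᴴ) :
    (∑ i, (α i - β i) ^ 2) ≤ ∑ i, ∑ j, ‖(A - B) i j‖ ^ 2 := by
  set V := Uᴴ * W
  have hV : V ∈ unitaryGroup (Fin n) ℂ := mul_mem (Unitary.star_mem hU) hW
  have hAB : A - B =
      U * (diagonal (fun i => (α i : ℂ)) * V - V * diagonal (fun i => (β i : ℂ))) * Wᴴ := by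
    have hUU : U * Uᴴ = 1 := Unitary.mul_star_self_of_mem hU
    have hWW : W * Wᴴ = 1 := Unitary.mul_star_self_of_mem hW
    rw [hA, hB, Matrix.mul_sub, Matrix.sub_mul]
    simp only [V, ← Matrix.mul_assoc, hUU, Matrix.one_mul]
    rw [Matrix.mul_assoc _ W, hWW, Matrix.mul_one]
  have hfrob : ∑ i, ∑ j, ‖(A - B) i j‖ ^ 2 = ∑ i, ∑ j, ‖V i j‖ ^ 2 * (α i - β j) ^ 2 := by
    rw [hAB, sum_norm_sq_mul_unitary (U := Wᴴ) (Unitary.star_mem hW), sum_norm_sq_unitary_mul hU]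
    simp only [diagonal_mul_sub_mul_diagonal_apply, norm_mul, mul_pow, ← Complex.ofReal_sub,
      Complex.norm_real, Real.norm_eq_abs, sq_abs, mul_comm]
  rw [hfrob]
  exact le_sum_mul_of_mem_doublyStochastic (norm_sq_mem_doublyStochastic hV)
    ((hα.monovary hβ).sum_sq_sub_le_sum_sq_sub_comp_perm)
end

section
/- Let A ∈ ℂ^{m×n} have a singular value decomposition A = Σ_{i=1}^n σ_i u_i v_i† with σ_1 ≥ σ_2 ≥ … ≥ σ_n ≥ 0 and v_1,…,v_n an orthonormal basis of ℂ^n. Let 1 ≤ r < n, let V_r ∈ ℂ^{n×r} be the matrix with columns v_1,…,v_r, and let Λ ∈ ℂ^{n×r} satisfy Λ†Λ = I_r. Then ‖A − AΛΛ†‖_F² − Σ_{i=r+1}^n σ_i² ≥ (σ_r² − σ_{r+1}²)·(r − ‖Λ†V_r‖_F²). (Note Σ_{i=r+1}^n σ_i² = ‖A − A_r‖_F², where A_r = Σ_{i=1}^r σ_i u_i v_i†.) -/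
/-!
Put `t i = ‖Λᴴ vᵢ‖²`. Since `Λᴴ Vm` has orthonormal rows, `0 ≤ t i ≤ 1` and `∑ t i = r`, and
the residual is `‖A − AΛΛᴴ‖_F² = ∑ σᵢ² (1 − t i)`. Removing the tail `∑_{i ≥ r} σᵢ²` leaves
`∑_{i < r} σᵢ² (1 − t i) − ∑_{i ≥ r} σᵢ² t i`. Both sums carry the same mass
`r − ∑_{i < r} t i = r − ‖Λᴴ V_r‖_F²`, and monotonicity of `σ` bounds the weights of the first
below by `σ_r²` and those of the second above by `σ_{r+1}²`.
-/

open Finset Matrix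

section FrobeniusSum

variable {l m n : Type*}

theorem sum_norm_sq_apply_eq_re_conjTranspose_mul_self [Fintype m] (M : Matrix m n ℂ) (j : n) :
    ∑ i, ‖M i j‖ ^ 2 = ((Mᴴ * M) j j).re := by
  simp only [mul_apply, conjTranspose_apply, Complex.re_sum]
  refine sum_congr rfl fun i _ => ?_
  rw [mul_comm, Complex.star_def, Complex.mul_conj', ← Complex.ofReal_pow, Complex.ofReal_re]

theorem sum_norm_sq_apply_eq_re_mul_conjTranspose_self [Fintype n] (M : Matrix m n ℂ) (i : m) :
    ∑ j, ‖M i j‖ ^ 2 = ((M * Mᴴ) i i).re := by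
  simpa using sum_norm_sq_apply_eq_re_conjTranspose_mul_self Mᴴ i

theorem sum_sum_norm_sq_isometry_mul [Fintype l] [Fintype m] [Fintype n] [DecidableEq m]
    {U : Matrix l m ℂ} (hU : Uᴴ * U = 1) (M : Matrix m n ℂ) :
    ∑ i, ∑ j, ‖(U * M) i j‖ ^ 2 = ∑ i, ∑ j, ‖M i j‖ ^ 2 := by
  rw [sum_comm, sum_comm (γ := m)]
  refine sum_congr rfl fun j _ => ?_
  rw [sum_norm_sq_apply_eq_re_conjTranspose_mul_self,
    sum_norm_sq_apply_eq_re_conjTranspose_mul_self, conjTranspose_mul, Matrix.mul_assoc,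
    ← Matrix.mul_assoc Uᴴ, hU, Matrix.one_mul]

theorem sum_norm_sq_diagonal_mul_apply [Fintype m] [Fintype n] [DecidableEq m] (d : m → ℝ)
    (M : Matrix m n ℂ) (i : m) :
    ∑ j, ‖(diagonal (fun i => (d i : ℂ)) * M) i j‖ ^ 2 = d i ^ 2 * ∑ j, ‖M i j‖ ^ 2 := by
  simp only [diagonal_mul, norm_mul, mul_pow, Complex.norm_real, Real.norm_eq_abs, sq_abs,
    mul_sum]

end FrobeniusSum

section Isometry

variable {m n r : Type*} [Fintype m] [Fintype n] [Fintype r] [DecidableEq n] [DecidableEq r]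
  {Λ : Matrix n r ℂ} {V : Matrix n n ℂ}

theorem one_sub_mul_conjTranspose_mul_conjTranspose (hΛ : Λᴴ * Λ = 1) :
    (1 - Λ * Λᴴ) * (1 - Λ * Λᴴ)ᴴ = 1 - Λ * Λᴴ := by
  have hP : Λ * Λᴴ * (Λ * Λᴴ) = Λ * Λᴴ := by
    rw [Matrix.mul_assoc, ← Matrix.mul_assoc Λᴴ, hΛ, Matrix.one_mul]
  rw [conjTranspose_sub, conjTranspose_one, conjTranspose_mul, conjTranspose_conjTranspose,
    Matrix.sub_mul, Matrix.one_mul, Matrix.mul_sub, Matrix.mul_one, hP, sub_self, sub_zero]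

theorem sum_sum_norm_sq_conjTranspose_mul_unitary (hΛ : Λᴴ * Λ = 1) (hV : V * Vᴴ = 1) :
    ∑ j, ∑ i, ‖(Λᴴ * V) i j‖ ^ 2 = Fintype.card r := by
  have hrows : Λᴴ * V * (Λᴴ * V)ᴴ = 1 := by
    rw [conjTranspose_mul, conjTranspose_conjTranspose, Matrix.mul_assoc, ← Matrix.mul_assoc V,
      hV, Matrix.one_mul, hΛ]
  rw [sum_comm]
  simp_rw [sum_norm_sq_apply_eq_re_mul_conjTranspose_self, hrows]
  simp

theorem sum_norm_sq_conjTranspose_unitary_mul_one_sub (hΛ : Λᴴ * Λ = 1) (hV : Vᴴ * V = 1)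
    (j : n) :
    ∑ k, ‖(Vᴴ * (1 - Λ * Λᴴ) : Matrix n n ℂ) j k‖ ^ 2 = 1 - ∑ i, ‖(Λᴴ * V) i j‖ ^ 2 := by
  have h : Vᴴ * (1 - Λ * Λᴴ) * (Vᴴ * (1 - Λ * Λᴴ))ᴴ = 1 - (Λᴴ * V)ᴴ * (Λᴴ * V) := by
    rw [conjTranspose_mul _ (1 - Λ * Λᴴ), conjTranspose_conjTranspose, Matrix.mul_assoc,
      ← Matrix.mul_assoc (1 - Λ * Λᴴ), one_sub_mul_conjTranspose_mul_conjTranspose hΛ,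
      conjTranspose_mul, conjTranspose_conjTranspose]
    simp only [Matrix.mul_sub, Matrix.sub_mul, Matrix.one_mul, hV, Matrix.mul_assoc]
  rw [sum_norm_sq_apply_eq_re_mul_conjTranspose_self, h,
    sum_norm_sq_apply_eq_re_conjTranspose_mul_self]
  simp

theorem sum_sum_norm_sq_sub_mul_mul_conjTranspose {A U : Matrix m n ℂ} {σ : n → ℝ}
    (hU : Uᴴ * U = 1) (hV : Vᴴ * V = 1) (hΛ : Λᴴ * Λ = 1)
    (hA : A = U * diagonal (fun i => (σ i : ℂ)) * Vᴴ) :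
    ∑ i, ∑ j, ‖(A - A * Λ * Λᴴ) i j‖ ^ 2 = ∑ i, σ i ^ 2 * (1 - ∑ k, ‖(Λᴴ * V) k i‖ ^ 2) := by
  have hres : A - A * Λ * Λᴴ = U * (diagonal (fun i => (σ i : ℂ)) * (Vᴴ * (1 - Λ * Λᴴ))) := by
    simp only [hA, Matrix.mul_sub, Matrix.mul_one, Matrix.mul_assoc]
  simp only [hres, sum_sum_norm_sq_isometry_mul hU, sum_norm_sq_diagonal_mul_apply,
    sum_norm_sq_conjTranspose_unitary_mul_one_sub hΛ hV]

end Isometry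

theorem sub_mul_sub_sum_le_sum_mul_one_sub_sub_sum {ι : Type*} [Fintype ι] [DecidableEq ι]
    (s : Finset ι) (w t : ι → ℝ) {a b : ℝ}
    (ht₀ : ∀ i ∈ s, 0 ≤ t i) (ht₁ : ∀ i ∉ s, t i ≤ 1) (hsum : ∑ i, t i = #sᶜ)
    (ha : ∀ i ∉ s, a ≤ w i) (hb : ∀ i ∈ s, w i ≤ b) :
    (a - b) * (#sᶜ - ∑ i ∈ sᶜ, t i) ≤ ∑ i, w i * (1 - t i) - ∑ i ∈ s, w i := by
  have hmass : ∑ i ∈ s, t i = #sᶜ - ∑ i ∈ sᶜ, t i := by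
    rw [← hsum, ← sum_add_sum_compl s t]; ring
  have hhead : a * (#sᶜ - ∑ i ∈ sᶜ, t i) ≤ ∑ i ∈ sᶜ, w i * (1 - t i) := by
    calc a * (#sᶜ - ∑ i ∈ sᶜ, t i) = ∑ i ∈ sᶜ, a * (1 - t i) := by
          rw [← mul_sum, sum_sub_distrib, sum_const, nsmul_one]
      _ ≤ ∑ i ∈ sᶜ, w i * (1 - t i) := sum_le_sum fun i hi =>
          mul_le_mul_of_nonneg_right (ha i (mem_compl.1 hi))
            (sub_nonneg.2 (ht₁ i (mem_compl.1 hi)))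
  have htail : ∑ i ∈ s, w i * t i ≤ b * (#sᶜ - ∑ i ∈ sᶜ, t i) := by
    rw [← hmass, mul_sum]
    exact sum_le_sum fun i hi => mul_le_mul_of_nonneg_right (hb i hi) (ht₀ i hi)
  have hsplit : ∑ i, w i * (1 - t i) - ∑ i ∈ s, w i
      = ∑ i ∈ sᶜ, w i * (1 - t i) - ∑ i ∈ s, w i * t i := by
    rw [← sum_add_sum_compl s]
    simp only [mul_one_sub, sum_sub_distrib]
    ring
  linarith

theorem Fin.sum_filter_not_le_val {M : Type*} [AddCommMonoid M] {r n : ℕ} (h : r ≤ n)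
    (f : Fin n → M) :
    ∑ i ∈ univ.filter (fun i : Fin n => ¬ r ≤ i.val), f i = ∑ j : Fin r, f (Fin.castLE h j) := by
  refine sum_bij' (fun i hi => ⟨i.val, by simp at hi; omega⟩) (fun j _ => Fin.castLE h j)
    ?_ ?_ ?_ ?_ ?_ <;> simp +contextual

/-- projection loss versus subspace overlap. Let `A = U diag(σ) Vm†` be a
singular value decomposition (`U†U = 1`, `Vm` unitary so its columns `v_1,…,v_n` form an
orthonormal basis, `σ` nonincreasing and nonnegative) and let `Λ ∈ ℂ^{n×r}` have
orthonormal columns, with `1 ≤ r < n`. Then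
`‖A − AΛΛ†‖_F² − ∑_{i=r+1}^n σ_i² ≥ (σ_r² − σ_{r+1}²)(r − ‖Λ†V_r‖_F²)`, where `V_r`
consists of the first `r` columns of `Vm` (indices are 1-based in this statement of the
inequality; `σ ⟨r-1,_⟩` and `σ ⟨r,_⟩` are the `r`-th and `(r+1)`-st singular values). -/
theorem stmt12 (m n : ℕ) (A U : Matrix (Fin m) (Fin n) ℂ)
    (Vm : Matrix (Fin n) (Fin n) ℂ)
    (σ : Fin n → ℝ) (hσanti : Antitone σ) (hσnn : ∀ i, 0 ≤ σ i)
    (hU : Uᴴ * U = 1) (hV : Vm ∈ Matrix.unitaryGroup (Fin n) ℂ)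
    (hA : A = U * Matrix.diagonal (fun i => ((σ i : ℝ) : ℂ)) * Vmᴴ)
    (r : ℕ) (hrn : r < n)
    (Λ : Matrix (Fin n) (Fin r) ℂ) (hΛ : Λᴴ * Λ = 1)
    (Vr : Matrix (Fin n) (Fin r) ℂ)
    (hVr : ∀ (i : Fin n) (j : Fin r), Vr i j = Vm i ⟨j.val, lt_trans j.isLt hrn⟩) :
    (σ ⟨r - 1, by omega⟩ ^ 2 - σ ⟨r, hrn⟩ ^ 2) *
        ((r : ℝ) - ∑ i, ∑ j, ‖(Λᴴ * Vr) i j‖ ^ 2) ≤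
      (∑ i, ∑ j, ‖(A - A * Λ * Λᴴ) i j‖ ^ 2) -
        ∑ i ∈ univ.filter (fun i : Fin n => r ≤ i.val), σ i ^ 2 := by
  have hVV : Vm * Vmᴴ = 1 := mem_unitaryGroup_iff.1 hV
  have hVV' : Vmᴴ * Vm = 1 := mem_unitaryGroup_iff'.1 hV
  set t : Fin n → ℝ := fun i => ∑ k, ‖(Λᴴ * Vm) k i‖ ^ 2
  set s := univ.filter (fun i : Fin n => r ≤ i.val)
  have hsc : sᶜ = univ.filter (fun i : Fin n => ¬ r ≤ i.val) := by
    ext; simp [s]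
  have hcard : ((#sᶜ : ℕ) : ℝ) = r := by
    rw [hsc, card_eq_sum_ones, Nat.cast_sum, Fin.sum_filter_not_le_val hrn.le]
    simp
  have hoverlap : ∑ i, ∑ j, ‖(Λᴴ * Vr) i j‖ ^ 2 = ∑ i ∈ sᶜ, t i := by
    rw [hsc, Fin.sum_filter_not_le_val hrn.le, sum_comm]
    simp only [t, mul_apply, hVr]
    rfl
  rw [sum_sum_norm_sq_sub_mul_mul_conjTranspose hU hVV' hΛ hA, hoverlap, ← hcard]
  refine sub_mul_sub_sum_le_sum_mul_one_sub_sub_sum s _ t ?_ ?_ ?_ ?_ ?_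
  · exact fun i _ => sum_nonneg fun k _ => by positivity
  · intro i _
    rw [← sub_nonneg, ← sum_norm_sq_conjTranspose_unitary_mul_one_sub hΛ hVV' i]
    exact sum_nonneg fun _ _ => sq_nonneg _
  · rw [hcard, sum_sum_norm_sq_conjTranspose_mul_unitary hΛ hVV, Fintype.card_fin]
  · intro i hi
    have : i.val < r := by simpa [s] using hi
    exact pow_le_pow_left₀ (hσnn _) (hσanti (Fin.le_iff_val_le_val.2 (by dsimp only; omega))) 2
  · intro i hi
    have : r ≤ i.val := by simpa [s] using hi
    exact pow_le_pow_left₀ (hσnn _) (hσanti (Fin.mk_le_of_le_val this)) 2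
end

section
/- Let k ≥ 1, 1 ≤ r ≤ k, c ≥ 0, and let x : [k]×[k] → ℝ be nonnegative with Σ_{j=1}^k x_{i,j} ≤ 1 for every i ∈ [k], Σ_{i=1}^k x_{i,j} ≤ 1 for every j ∈ [k], and Σ_{i=1}^s Σ_{j=1}^s x_{i,j} ≥ s − c for both s = r−1 and s = r. Then x_{r,r} ≥ 1 − 2c. -/
open Finset

/-- the doubly substochastic corner bound. For a nonnegative array
`x : [k]×[k] → ℝ` with all row sums and column sums at most `1`, if the top-left `s×s`
block sums are at least `s − c` for both `s = r−1` and `s = r` (with `1 ≤ r ≤ k`), then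
`x r r ≥ 1 − 2c`. -/
theorem stmt13 (k r : ℕ) (hk : 1 ≤ k) (hr1 : 1 ≤ r) (hrk : r ≤ k)
    (c : ℝ) (hc : 0 ≤ c)
    (x : ℕ → ℕ → ℝ) (hxnn : ∀ i j, 0 ≤ x i j)
    (hrow : ∀ i ∈ Finset.Icc 1 k, (∑ j ∈ Finset.Icc 1 k, x i j) ≤ 1)
    (hcol : ∀ j ∈ Finset.Icc 1 k, (∑ i ∈ Finset.Icc 1 k, x i j) ≤ 1)
    (hblock : ∀ s, (s = r - 1 ∨ s = r) →
      (s : ℝ) - c ≤ ∑ i ∈ Finset.Icc 1 s, ∑ j ∈ Finset.Icc 1 s, x i j) :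
    1 - 2 * c ≤ x r r := by
  obtain ⟨m, rfl⟩ : ∃ m, r = m + 1 := ⟨r - 1, (Nat.succ_pred_eq_of_pos hr1).symm⟩
  set S1 := ∑ i ∈ Icc 1 m, ∑ j ∈ Icc 1 m, x i j with hS1def
  set A := ∑ j ∈ Icc 1 m, x (m+1) j with hAdef
  set B := ∑ i ∈ Icc 1 m, x i (m+1) with hBdef
  have hmem : ∀ i ∈ Icc 1 (m+1), i ∈ Icc 1 k := by
    intro i hi
    simp only [mem_Icc] at *
    omega
  have hsub : Icc 1 (m+1) ⊆ Icc 1 k := fun i hi => hmem i hi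
  have hrowext : ∀ i ∈ Icc 1 m, (∑ j ∈ Icc 1 (m+1), x i j) ≤ 1 := by
    intro i hi
    have hik : i ∈ Icc 1 k := hmem i (by simp only [mem_Icc] at *; omega)
    calc (∑ j ∈ Icc 1 (m+1), x i j) ≤ ∑ j ∈ Icc 1 k, x i j :=
          Finset.sum_le_sum_of_subset_of_nonneg hsub (fun j _ _ => hxnn i j)
      _ ≤ 1 := hrow i hik
  have hcolext : ∀ j ∈ Icc 1 m, (∑ i ∈ Icc 1 (m+1), x i j) ≤ 1 := by
    intro j hj
    have hjk : j ∈ Icc 1 k := hmem j (by simp only [mem_Icc] at *; omega)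
    calc (∑ i ∈ Icc 1 (m+1), x i j) ≤ ∑ i ∈ Icc 1 k, x i j :=
          Finset.sum_le_sum_of_subset_of_nonneg hsub (fun i _ _ => hxnn i j)
      _ ≤ 1 := hcol j hjk
  have h1 : ∑ i ∈ Icc 1 (m+1), ∑ j ∈ Icc 1 (m+1), x i j
      = S1 + B + (A + x (m+1) (m+1)) := by
    rw [Finset.sum_Icc_succ_top (by omega : 1 ≤ m+1)]
    have : ∀ i, ∑ j ∈ Icc 1 (m+1), x i j = (∑ j ∈ Icc 1 m, x i j) + x i (m+1) :=
      fun i => Finset.sum_Icc_succ_top (by omega : 1 ≤ m+1) _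
    rw [this (m+1)]
    rw [Finset.sum_congr rfl (fun i _ => this i), Finset.sum_add_distrib]
  have h2 : S1 + B ≤ (m : ℝ) := by
    have : S1 + B = ∑ i ∈ Icc 1 m, ∑ j ∈ Icc 1 (m+1), x i j := by
      rw [hS1def, hBdef, ← Finset.sum_add_distrib]
      exact Finset.sum_congr rfl fun i _ =>
        (Finset.sum_Icc_succ_top (by omega : 1 ≤ m+1) _).symm
    rw [this]
    calc ∑ i ∈ Icc 1 m, ∑ j ∈ Icc 1 (m+1), x i j ≤ ∑ _i ∈ Icc 1 m, (1:ℝ) :=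
          Finset.sum_le_sum hrowext
      _ = (m : ℝ) := by simp
  have h3 : S1 + A ≤ (m : ℝ) := by
    have : S1 + A = ∑ j ∈ Icc 1 m, ∑ i ∈ Icc 1 (m+1), x i j := by
      rw [hS1def, Finset.sum_comm, hAdef, ← Finset.sum_add_distrib]
      exact Finset.sum_congr rfl fun j _ =>
        (Finset.sum_Icc_succ_top (by omega : 1 ≤ m+1) _).symm
    rw [this]
    calc ∑ j ∈ Icc 1 m, ∑ i ∈ Icc 1 (m+1), x i j ≤ ∑ _j ∈ Icc 1 m, (1:ℝ) :=
          Finset.sum_le_sum hcolext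
      _ = (m : ℝ) := by simp
  have hb1 : (m : ℝ) - c ≤ S1 := by
    have := hblock m (Or.inl (by omega))
    simpa using this
  have hb2 : ((m : ℝ) + 1) - c ≤ ∑ i ∈ Icc 1 (m+1), ∑ j ∈ Icc 1 (m+1), x i j := by
    have := hblock (m+1) (Or.inr rfl)
    push_cast at this
    exact this
  rw [h1] at hb2
  linarith
end

section
/- Let A ∈ ℂ^{m×n}, let r ≥ 1, let Λ ∈ ℂ^{n×r} satisfy Λ†Λ = I_r, let V̂ ∈ ℂ^{n×r}, and suppose ‖V̂ − Λ‖_F ≤ ε for some ε ∈ [0,1]. Then ‖A − AΛΛ†‖_F ≤ ‖A − AV̂V̂†‖_F + 3ε‖A‖_F. -/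
/-!
Write `V̂ = Λ + E`. Then `AV̂V̂† − AΛΛ† = AEΛ† + AΛE† + AEE†`, and each of the three terms has
Frobenius norm at most `ε‖A‖_F`: right multiplication by `Λ†` preserves the Frobenius norm,
right multiplication by `Λ` does not increase it (Pythagoras for the projection `ΛΛ†`), and
the quadratic term is handled by `‖E‖_F² ≤ ε² ≤ ε`.
-/

open Matrix

attribute [local instance] Matrix.frobeniusSeminormedAddCommGroup

namespace Matrix

variable {𝕜 : Type*} [RCLike 𝕜] {m n r : Type*} [Fintype m] [Fintype n] [Fintype r]

theorem frobenius_norm_sq_eq_sum {α : Type*} [SeminormedAddCommGroup α] (M : Matrix m n α) :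
    ‖M‖ ^ 2 = ∑ i, ∑ j, ‖M i j‖ ^ 2 := by
  rw [frobenius_norm_def, ← Real.rpow_natCast, ← Real.rpow_mul (by positivity)]
  norm_num

theorem frobenius_norm_eq_sqrt {α : Type*} [SeminormedAddCommGroup α] (M : Matrix m n α) :
    ‖M‖ = √(∑ i, ∑ j, ‖M i j‖ ^ 2) := by
  rw [← frobenius_norm_sq_eq_sum, Real.sqrt_sq (norm_nonneg M)]

theorem frobenius_norm_sq_eq_re_trace (M : Matrix m n 𝕜) :
    ‖M‖ ^ 2 = RCLike.re (Mᴴ * M).trace := by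
  simp only [frobenius_norm_sq_eq_sum, trace, diag_apply, mul_apply, conjTranspose_apply,
    RCLike.star_def, RCLike.conj_mul, map_sum, ← RCLike.ofReal_pow, RCLike.ofReal_re]
  exact Finset.sum_comm

variable [DecidableEq r] {Λ : Matrix n r 𝕜}

theorem frobenius_norm_mul_conjTranspose_of_isometry (hΛ : Λᴴ * Λ = 1) (M : Matrix m r 𝕜) :
    ‖M * Λᴴ‖ = ‖M‖ := by
  rw [← sq_eq_sq₀ (norm_nonneg _) (norm_nonneg _), frobenius_norm_sq_eq_re_trace,
    frobenius_norm_sq_eq_re_trace, conjTranspose_mul, conjTranspose_conjTranspose,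
    show Λ * Mᴴ * (M * Λᴴ) = Λ * (Mᴴ * M) * Λᴴ by simp only [Matrix.mul_assoc],
    trace_mul_cycle, hΛ, Matrix.one_mul]

theorem frobenius_norm_sub_mul_mul_conjTranspose_sq (hΛ : Λᴴ * Λ = 1) (A : Matrix m n 𝕜) :
    ‖A - A * Λ * Λᴴ‖ ^ 2 = ‖A‖ ^ 2 - ‖A * Λ‖ ^ 2 := by
  simp only [frobenius_norm_sq_eq_re_trace]
  have hP : Λ * Λᴴ * (Λ * Λᴴ) = Λ * Λᴴ := by
    rw [Matrix.mul_assoc, ← Matrix.mul_assoc Λᴴ, hΛ, Matrix.one_mul]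
  have expand : (A - A * Λ * Λᴴ)ᴴ * (A - A * Λ * Λᴴ) =
      Aᴴ * A - Aᴴ * A * (Λ * Λᴴ) - Λ * Λᴴ * (Aᴴ * A) + Λ * Λᴴ * (Aᴴ * A) * (Λ * Λᴴ) := by
    simp only [conjTranspose_sub, conjTranspose_mul, conjTranspose_conjTranspose,
      Matrix.sub_mul, Matrix.mul_sub, Matrix.mul_assoc]
    abel
  have hcross : (Λ * Λᴴ * (Aᴴ * A)).trace = (Aᴴ * A * (Λ * Λᴴ)).trace := trace_mul_comm _ _
  have hlast : (Λ * Λᴴ * (Aᴴ * A) * (Λ * Λᴴ)).trace = (Aᴴ * A * (Λ * Λᴴ)).trace := by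
    rw [trace_mul_cycle (Λ * Λᴴ), hP, trace_mul_comm]
  have hAΛ : ((A * Λ)ᴴ * (A * Λ)).trace = (Aᴴ * A * (Λ * Λᴴ)).trace := by
    rw [conjTranspose_mul, show Λᴴ * Aᴴ * (A * Λ) = Λᴴ * (Aᴴ * A) * Λ by
      simp only [Matrix.mul_assoc], trace_mul_cycle, trace_mul_comm]
  rw [expand, hAΛ, trace_add, trace_sub, trace_sub, hcross, hlast]
  simp only [map_add, map_sub]
  ring

theorem frobenius_norm_mul_le_of_isometry (hΛ : Λᴴ * Λ = 1) (A : Matrix m n 𝕜) :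
    ‖A * Λ‖ ≤ ‖A‖ := by
  have := frobenius_norm_sub_mul_mul_conjTranspose_sq hΛ A
  exact (sq_le_sq₀ (norm_nonneg _) (norm_nonneg _)).1 (by nlinarith [sq_nonneg ‖A - A * Λ * Λᴴ‖])

theorem frobenius_norm_sub_mul_mul_conjTranspose_le (hΛ : Λᴴ * Λ = 1) (A : Matrix m n 𝕜)
    (V : Matrix n r 𝕜) {ε : ℝ} (hε : ε ≤ 1) (hV : ‖V - Λ‖ ≤ ε) :
    ‖A - A * Λ * Λᴴ‖ ≤ ‖A - A * V * Vᴴ‖ + 3 * ε * ‖A‖ := by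
  set E := V - Λ with hE_def
  have decomp : A - A * Λ * Λᴴ =
      (A - A * V * Vᴴ) + (A * E * Λᴴ + A * E * Eᴴ + A * Λ * Eᴴ) := by
    simp only [hE_def, conjTranspose_sub, Matrix.mul_sub, Matrix.sub_mul]
    abel
  have hE_conj : ‖Eᴴ‖ = ‖E‖ := frobenius_norm_conjTranspose E
  have hAE : ‖A * E‖ ≤ ‖A‖ * ε := (frobenius_norm_mul A E).trans (by gcongr)
  have h₁ : ‖A * E * Λᴴ‖ ≤ ε * ‖A‖ := by
    rw [frobenius_norm_mul_conjTranspose_of_isometry hΛ]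
    linarith
  have h₂ : ‖A * E * Eᴴ‖ ≤ ε * ‖A‖ :=
    calc ‖A * E * Eᴴ‖ ≤ ‖A * E‖ * ‖E‖ := hE_conj ▸ frobenius_norm_mul _ _
      _ ≤ ‖A * E‖ := mul_le_of_le_one_right (norm_nonneg _) (hV.trans hε)
      _ ≤ ‖A‖ * ε := hAE
      _ = ε * ‖A‖ := mul_comm _ _
  have h₃ : ‖A * Λ * Eᴴ‖ ≤ ε * ‖A‖ :=
    calc ‖A * Λ * Eᴴ‖ ≤ ‖A * Λ‖ * ‖E‖ := hE_conj ▸ frobenius_norm_mul _ _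
      _ ≤ ‖A‖ * ε := by gcongr; exact frobenius_norm_mul_le_of_isometry hΛ A
      _ = ε * ‖A‖ := mul_comm _ _
  calc ‖A - A * Λ * Λᴴ‖
      ≤ ‖A - A * V * Vᴴ‖ + (‖A * E * Λᴴ‖ + ‖A * E * Eᴴ‖ + ‖A * Λ * Eᴴ‖) := by
        rw [decomp]
        exact (norm_add_le _ _).trans (add_le_add le_rfl norm_add₃_le)
    _ ≤ ‖A - A * V * Vᴴ‖ + 3 * ε * ‖A‖ := by linarith

end Matrix

theorem stmt14_general (m n r : ℕ) (A : Matrix (Fin m) (Fin n) ℂ)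
    (Λ Vh : Matrix (Fin n) (Fin r) ℂ) (hΛ : Λᴴ * Λ = 1)
    (ε : ℝ) (hε : ε ∈ Set.Icc (0:ℝ) 1)
    (h : Real.sqrt (∑ i, ∑ j, ‖(Vh - Λ) i j‖ ^ 2) ≤ ε) :
    Real.sqrt (∑ i, ∑ j, ‖(A - A * Λ * Λᴴ) i j‖ ^ 2) ≤
      Real.sqrt (∑ i, ∑ j, ‖(A - A * Vh * Vhᴴ) i j‖ ^ 2) +
        3 * ε * Real.sqrt (∑ i, ∑ j, ‖A i j‖ ^ 2) := by
  simp only [← frobenius_norm_eq_sqrt] at h ⊢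
  exact frobenius_norm_sub_mul_mul_conjTranspose_le hΛ A Vh hε.2 h

/-- stability of the projection loss. If `Λ ∈ ℂ^{n×r}` has orthonormal
columns and `V̂ ∈ ℂ^{n×r}` satisfies `‖V̂ − Λ‖_F ≤ ε` for some `ε ∈ [0,1]`, then
`‖A − AΛΛ†‖_F ≤ ‖A − AV̂V̂†‖_F + 3ε‖A‖_F`. -/
theorem stmt14 (m n r : ℕ) (hr : 1 ≤ r) (A : Matrix (Fin m) (Fin n) ℂ)
    (Λ Vh : Matrix (Fin n) (Fin r) ℂ) (hΛ : Λᴴ * Λ = 1)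
    (ε : ℝ) (hε : ε ∈ Set.Icc (0:ℝ) 1)
    (h : Real.sqrt (∑ i, ∑ j, ‖(Vh - Λ) i j‖ ^ 2) ≤ ε) :
    Real.sqrt (∑ i, ∑ j, ‖(A - A * Λ * Λᴴ) i j‖ ^ 2) ≤
      Real.sqrt (∑ i, ∑ j, ‖(A - A * Vh * Vhᴴ) i j‖ ^ 2) +
        3 * ε * Real.sqrt (∑ i, ∑ j, ‖A i j‖ ^ 2) :=
  stmt14_general m n r A Λ Vh hΛ ε hε h
end

section
/- Let A ∈ ℂ^{m×n} be nonzero with singular value decomposition A = Σ_{i=1}^n σ_i u_i v_i†, where σ_1 ≥ … ≥ σ_n ≥ 0 and v_1,…,v_n form an orthonormal basis of ℂ^n; write A_r = Σ_{i=1}^r σ_i u_i v_i†. Let η > 0 and k ≥ 1 satisfy σ_r² − σ_{r+1}² ≥ η‖A‖_F² for every r ∈ [k]. Let ℓ ≥ k, let Λ ∈ ℂ^{n×ℓ} have orthonormal columns, write Λ_r ∈ ℂ^{n×r} for the matrix of its first r columns, and suppose that for some ε ≥ 0 and every r ∈ [k], ‖A − AΛ_rΛ_r†‖_F² ≤ ‖A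 − A_r‖_F² + ε‖A‖_F². Then for every r ∈ [k], |⟨v_r, Λ_{*,r}⟩|² ≥ 1 − 2ε/η, where Λ_{*,r} is the r-th column of Λ. -/
open Finset Matrix

lemma colnorm {n ℓ : ℕ} (M : Matrix (Fin n) (Fin ℓ) ℂ) (j : Fin ℓ) :
    ∑ i, ‖M i j‖^2 = ((Mᴴ*M) j j).re := by
  rw [Matrix.mul_apply, Complex.re_sum]
  simp [Matrix.conjTranspose_apply, Complex.sq_norm, Complex.normSq_apply]

lemma rownorm {n ℓ : ℕ} (M : Matrix (Fin n) (Fin ℓ) ℂ) (i : Fin n) :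
    ∑ j, ‖M i j‖^2 = ((M*Mᴴ) i i).re := by
  rw [Matrix.mul_apply, Complex.re_sum]
  simp [Matrix.conjTranspose_apply, Complex.sq_norm, Complex.normSq_apply, mul_comm]

lemma frob_trace {m n : ℕ} (M : Matrix (Fin m) (Fin n) ℂ) :
    ∑ i, ∑ j, ‖M i j‖^2 = ((Mᴴ*M).trace).re := by
  rw [Matrix.trace, Complex.re_sum, Finset.sum_comm]
  simp only [Matrix.diag]
  exact Finset.sum_congr rfl fun j _ => colnorm M j

lemma colsum {n ℓ : ℕ} (Vm : Matrix (Fin n) (Fin n) ℂ)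
    (hV : Vm ∈ Matrix.unitaryGroup (Fin n) ℂ)
    (Λ : Matrix (Fin n) (Fin ℓ) ℂ) (hΛ : Λᴴ * Λ = 1) (j : Fin ℓ) :
    ∑ i, ‖(Vmᴴ * Λ) i j‖^2 = 1 := by
  have hVV : Vm * Vmᴴ = 1 := Matrix.mem_unitaryGroup_iff.mp hV
  rw [colnorm]
  have : (Vmᴴ * Λ)ᴴ * (Vmᴴ * Λ) = 1 := by
    simp only [Matrix.conjTranspose_mul, Matrix.conjTranspose_conjTranspose,
      Matrix.mul_assoc]
    rw [← Matrix.mul_assoc Vm Vmᴴ, hVV, Matrix.one_mul, hΛ]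
  rw [this]; simp

lemma rowsum {n ℓ : ℕ} (Vm : Matrix (Fin n) (Fin n) ℂ)
    (hV : Vm ∈ Matrix.unitaryGroup (Fin n) ℂ)
    (Λ : Matrix (Fin n) (Fin ℓ) ℂ) (hΛ : Λᴴ * Λ = 1) (i : Fin n) :
    ∑ j, ‖(Vmᴴ * Λ) i j‖^2 ≤ 1 := by
  have hVV : Vmᴴ * Vm = 1 := Matrix.mem_unitaryGroup_iff'.mp hV
  rw [rownorm]
  set R : Matrix (Fin n) (Fin n) ℂ := 1 - Λ * Λᴴ with hR
  have hRH : Rᴴ = R := by simp [hR, Matrix.conjTranspose_mul]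
  have hRR : R * R = R := by
    simp only [hR, Matrix.sub_mul, Matrix.mul_sub, Matrix.one_mul, Matrix.mul_one]
    rw [show Λ * Λᴴ * (Λ * Λᴴ) = Λ * (Λᴴ * Λ) * Λᴴ by
      simp only [Matrix.mul_assoc], hΛ, Matrix.mul_one]
    abel
  have hsplit : (Vmᴴ * Λ) * (Vmᴴ * Λ)ᴴ = 1 - (R * Vm)ᴴ * (R * Vm) := by
    have h1 : (R * Vm)ᴴ * (R * Vm) = Vmᴴ * R * Vm := by
      rw [Matrix.conjTranspose_mul, hRH, Matrix.mul_assoc, ← Matrix.mul_assoc R R,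
        hRR, ← Matrix.mul_assoc]
    rw [h1, hR]
    simp only [Matrix.conjTranspose_mul, Matrix.conjTranspose_conjTranspose,
      Matrix.mul_sub, Matrix.sub_mul, Matrix.mul_one, Matrix.one_mul, hVV]
    simp only [Matrix.mul_assoc]
    abel
  rw [hsplit]
  have h2 : 0 ≤ (((R * Vm)ᴴ * (R * Vm)) i i).re := by
    rw [← colnorm]; positivity
  simp only [Matrix.sub_apply, Matrix.one_apply_eq, Complex.sub_re, Complex.one_re]
  linarith

lemma frob_svd {m n : ℕ} (U : Matrix (Fin m) (Fin n) ℂ) (hU : Uᴴ * U = 1)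
    (Vm : Matrix (Fin n) (Fin n) ℂ) (hV : Vm ∈ Matrix.unitaryGroup (Fin n) ℂ)
    (d : Fin n → ℂ) :
    ∑ i, ∑ j, ‖(U * Matrix.diagonal d * Vmᴴ) i j‖^2 = ∑ i, ‖d i‖^2 := by
  have hVV : Vmᴴ * Vm = 1 := Matrix.mem_unitaryGroup_iff'.mp hV
  rw [frob_trace]
  have h1 : (U * Matrix.diagonal d * Vmᴴ)ᴴ * (U * Matrix.diagonal d * Vmᴴ)
      = Vm * ((Matrix.diagonal d)ᴴ * Matrix.diagonal d) * Vmᴴ := by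
    simp only [Matrix.conjTranspose_mul, Matrix.conjTranspose_conjTranspose,
      Matrix.mul_assoc]
    rw [← Matrix.mul_assoc Uᴴ U, hU, Matrix.one_mul]
  rw [h1, Matrix.trace_mul_comm, ← Matrix.mul_assoc, hVV, Matrix.one_mul]
  rw [Matrix.trace, Complex.re_sum]
  simp [Matrix.diag, Matrix.mul_apply, Matrix.diagonal, Complex.sq_norm,
    Complex.normSq_apply, Matrix.conjTranspose_apply]

lemma key3 {m n ℓ : ℕ} (U : Matrix (Fin m) (Fin n) ℂ) (hU : Uᴴ * U = 1)
    (Vm : Matrix (Fin n) (Fin n) ℂ) (σ : Fin n → ℝ)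
    (Λ : Matrix (Fin n) (Fin ℓ) ℂ) (j : Fin ℓ) :
    ∑ p, ‖((U * Matrix.diagonal (fun i => ((σ i : ℝ) : ℂ)) * Vmᴴ) * Λ) p j‖^2
      = ∑ i, (σ i)^2 * ‖(Vmᴴ * Λ) i j‖^2 := by
  set D := Matrix.diagonal (fun i : Fin n => ((σ i : ℝ) : ℂ)) with hD
  set B := Vmᴴ * Λ with hB
  have h1 : (U * D * Vmᴴ * Λ)ᴴ * (U * D * Vmᴴ * Λ)
      = Bᴴ * (Matrix.diagonal (fun i : Fin n => (((σ i)^2 : ℝ) : ℂ))) * B := by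
    have hDD : Dᴴ * D = Matrix.diagonal (fun i : Fin n => (((σ i)^2 : ℝ) : ℂ)) := by
      rw [hD, Matrix.diagonal_conjTranspose, Matrix.diagonal_mul_diagonal]
      congr 1; funext i
      simp [← Complex.ofReal_mul, sq]
    rw [← hDD]
    simp only [Matrix.conjTranspose_mul, Matrix.conjTranspose_conjTranspose,
      Matrix.mul_assoc, hB]
    rw [← Matrix.mul_assoc Uᴴ U, hU, Matrix.one_mul]
  rw [colnorm, h1]
  rw [Matrix.mul_apply, Complex.re_sum]
  refine Finset.sum_congr rfl fun i _ => ?_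
  rw [Matrix.mul_diagonal, Matrix.conjTranspose_apply]
  rw [show star (B i j) * ↑((σ i)^2) * B i j
      = ((((σ i)^2 : ℝ)) : ℂ) * (B i j * (starRingEnd ℂ) (B i j)) by
    rw [show (starRingEnd ℂ) (B i j) = star (B i j) from rfl]; ring, Complex.mul_conj]
  rw [← Complex.ofReal_mul, Complex.ofReal_re]
  simp [Complex.sq_norm, Complex.normSq_apply]

lemma proj_frob {m n ℓ : ℕ} (A : Matrix (Fin m) (Fin n) ℂ)
    (N : Matrix (Fin n) (Fin ℓ) ℂ) (hN : N * (Nᴴ * N) = N) :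
    ∑ i, ∑ j, ‖(A - A * (N * Nᴴ)) i j‖^2
      = (∑ i, ∑ j, ‖A i j‖^2) - ∑ j, ∑ i, ‖(A*N) i j‖^2 := by
  have htY : ∑ j, ∑ i, ‖(A*N) i j‖^2 = (((A*N)ᴴ * (A*N)).trace).re := by
    rw [Matrix.trace, Complex.re_sum]
    exact Finset.sum_congr rfl fun j _ => colnorm (A*N) j
  rw [frob_trace, frob_trace, htY]
  have hexp : (A - A * (N * Nᴴ))ᴴ * (A - A * (N * Nᴴ))
      = Aᴴ * A - Aᴴ * (A * (N * Nᴴ)) - N * (Nᴴ * (Aᴴ * A))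
        + N * (Nᴴ * (Aᴴ * (A * (N * Nᴴ)))) := by
    simp only [Matrix.conjTranspose_sub, Matrix.conjTranspose_mul,
      Matrix.conjTranspose_conjTranspose, Matrix.sub_mul, Matrix.mul_sub,
      Matrix.mul_assoc]
    abel
  have h1 : (Aᴴ * (A * (N * Nᴴ))).trace = ((A*N)ᴴ*(A*N)).trace := by
    rw [show Aᴴ * (A * (N * Nᴴ)) = (Aᴴ * (A * N)) * Nᴴ by simp only [Matrix.mul_assoc],
      Matrix.trace_mul_comm]
    congr 1
    simp only [Matrix.conjTranspose_mul, Matrix.mul_assoc]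
  have h2 : (N * (Nᴴ * (Aᴴ * A))).trace = ((A*N)ᴴ*(A*N)).trace := by
    rw [Matrix.trace_mul_comm]
    congr 1
    simp only [Matrix.conjTranspose_mul, Matrix.mul_assoc]
  have h3 : (N * (Nᴴ * (Aᴴ * (A * (N * Nᴴ))))).trace = ((A*N)ᴴ*(A*N)).trace := by
    rw [Matrix.trace_mul_comm]
    congr 1
    calc Nᴴ * (Aᴴ * (A * (N * Nᴴ))) * N = (Nᴴ * (Aᴴ * (A * N))) * (Nᴴ * N) := by
          simp only [Matrix.mul_assoc]
      _ = Nᴴ * (Aᴴ * (A * (N * (Nᴴ * N)))) := by simp only [Matrix.mul_assoc]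
      _ = (A*N)ᴴ*(A*N) := by rw [hN]; simp only [Matrix.conjTranspose_mul, Matrix.mul_assoc]
  rw [hexp, Matrix.trace_add, Matrix.trace_sub, Matrix.trace_sub, h1, h2, h3]
  simp only [Complex.add_re, Complex.sub_re]
  ring

lemma cardlt (L r : ℕ) (h : r ≤ L) : (univ.filter (fun j : Fin L => j.val < r)).card = r := by
  rcases h.lt_or_eq with h' | h'
  · have : (univ.filter (fun j : Fin L => j.val < r)) = Finset.Iio (⟨r, h'⟩ : Fin L) := by
      ext j; simp [Fin.lt_def]
    rw [this, Fin.card_Iio]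
  · subst h'
    have : (univ.filter (fun j : Fin r => j.val < r)) = univ := by
      ext j; simp [j.isLt]
    rw [this, Finset.card_univ, Fintype.card_fin]


lemma keycomb {n ℓ : ℕ} (s : ℕ) (hsn : s < n) (hsl : s ≤ ℓ)
    (sq : Fin n → ℝ) (c : Fin n → Fin ℓ → ℝ)
    (hcnn : ∀ i j, 0 ≤ c i j)
    (hcol : ∀ j, ∑ i, c i j = 1)
    (hrowle : ∀ i, ∑ j ∈ univ.filter (fun j : Fin ℓ => j.val < s), c i j ≤ 1)
    (α β : ℝ) (hlo : ∀ i : Fin n, i.val < s → α ≤ sq i)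
    (hhi : ∀ i : Fin n, ¬ i.val < s → sq i ≤ β)
    (E : ℝ)
    (hm : (∑ i ∈ univ.filter (fun i : Fin n => i.val < s), sq i)
        - (∑ j ∈ univ.filter (fun j : Fin ℓ => j.val < s), ∑ i, sq i * c i j) ≤ E)
    (g : ℝ) (hg : g ≤ α - β) :
    g * (∑ i ∈ univ.filter (fun i : Fin n => i.val < s),
      (1 - ∑ j ∈ univ.filter (fun j : Fin ℓ => j.val < s), c i j)) ≤ E := by
  classical
  set ρ : Fin n → ℝ := fun i => ∑ j ∈ univ.filter (fun j : Fin ℓ => j.val < s), c i j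
    with hρdef
  show g * (∑ i ∈ univ.filter (fun i : Fin n => i.val < s), (1 - ρ i)) ≤ E
  have hρle : ∀ i, ρ i ≤ 1 := hrowle
  have hρnn : ∀ i, 0 ≤ ρ i := fun i => Finset.sum_nonneg fun j _ => hcnn i j
  have hswap : ∑ j ∈ univ.filter (fun j : Fin ℓ => j.val < s), ∑ i, sq i * c i j
      = ∑ i, sq i * ρ i := by
    rw [Finset.sum_comm]
    exact Finset.sum_congr rfl fun i _ => (Finset.mul_sum _ _ _).symm
  have hsumρ : ∑ i, ρ i = (s:ℝ) := by
    rw [hρdef]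
    rw [Finset.sum_comm]
    rw [Finset.sum_congr rfl fun j _ => hcol j, Finset.sum_const,
      cardlt ℓ s hsl, nsmul_eq_mul, mul_one]
  have hsplitρ := Finset.sum_filter_add_sum_filter_not (univ : Finset (Fin n))
    (fun i : Fin n => i.val < s) ρ
  have hsplitσρ := Finset.sum_filter_add_sum_filter_not (univ : Finset (Fin n))
    (fun i : Fin n => i.val < s) (fun i => sq i * ρ i)
  have hDr : ∑ i ∈ univ.filter (fun i : Fin n => i.val < s), (1 - ρ i)
      = (s:ℝ) - ∑ i ∈ univ.filter (fun i : Fin n => i.val < s), ρ i := by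
    rw [Finset.sum_sub_distrib, Finset.sum_const, cardlt n s hsn.le, nsmul_eq_mul, mul_one]
  have hDrnn : 0 ≤ ∑ i ∈ univ.filter (fun i : Fin n => i.val < s), (1 - ρ i) :=
    Finset.sum_nonneg fun i _ => by linarith [hρle i]
  have hsub : ∑ i ∈ univ.filter (fun i : Fin n => i.val < s), sq i * (1 - ρ i)
      = (∑ i ∈ univ.filter (fun i : Fin n => i.val < s), sq i)
        - ∑ i ∈ univ.filter (fun i : Fin n => i.val < s), sq i * ρ i := by
    rw [← Finset.sum_sub_distrib]
    exact Finset.sum_congr rfl fun i _ => by ring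
  have hlow1 : α * (∑ i ∈ univ.filter (fun i : Fin n => i.val < s), (1 - ρ i))
      ≤ ∑ i ∈ univ.filter (fun i : Fin n => i.val < s), sq i * (1 - ρ i) := by
    rw [Finset.mul_sum]
    refine Finset.sum_le_sum fun i hi => ?_
    have hi' : i.val < s := (Finset.mem_filter.mp hi).2
    exact mul_le_mul_of_nonneg_right (hlo i hi') (by linarith [hρle i])
  have hlow2 : ∑ i ∈ univ.filter (fun i : Fin n => ¬ i.val < s), sq i * ρ i
      ≤ β * ∑ i ∈ univ.filter (fun i : Fin n => ¬ i.val < s), ρ i := by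
    rw [Finset.mul_sum]
    refine Finset.sum_le_sum fun i hi => ?_
    have hi' : ¬ i.val < s := (Finset.mem_filter.mp hi).2
    exact mul_le_mul_of_nonneg_right (hhi i hi') (hρnn i)
  rw [hswap] at hm
  -- abbreviate
  set X := ∑ i ∈ univ.filter (fun i : Fin n => i.val < s), ρ i with hX
  have hnotX : ∑ i ∈ univ.filter (fun i : Fin n => ¬ i.val < s), ρ i = (s:ℝ) - X := by
    linarith [hsplitρ, hsumρ]
  rw [hDr]
  rw [hDr] at hDrnn hlow1
  rw [hnotX] at hlow2
  nlinarith [hm, hsplitσρ, hsub, hlow1, hlow2, hg, hDrnn]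

/-- from rank-`r` projection guarantees to singular vector overlap. Let
`A = U diag(σ) Vm†` be an SVD of a nonzero matrix (`U†U = 1`, `Vm` unitary, `σ`
nonincreasing and nonnegative), with eigenvalue gaps `σ_r² − σ_{r+1}² ≥ η‖A‖_F²` for
`r ∈ [k]`. Let `Λ ∈ ℂ^{n×ℓ}` (`ℓ ≥ k`) have orthonormal columns, `P r = Λ_r Λ_r†` the
projection onto its first `r` columns, and `A_r` the rank-`r` SVD truncation of `A`.
If `‖A − A·(P r)‖_F² ≤ ‖A − A_r‖_F² + ε‖A‖_F²` for every `r ∈ [k]`, then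
`|⟨v_r, Λ_{*,r}⟩|² ≥ 1 − 2ε/η` for every `r ∈ [k]` (1-based indices). -/
theorem stmt15 (m n : ℕ) (A U : Matrix (Fin m) (Fin n) ℂ) (hA : A ≠ 0)
    (Vm : Matrix (Fin n) (Fin n) ℂ)
    (σ : Fin n → ℝ) (hσanti : Antitone σ) (hσnn : ∀ i, 0 ≤ σ i)
    (hU : Uᴴ * U = 1) (hV : Vm ∈ Matrix.unitaryGroup (Fin n) ℂ)
    (hAsvd : A = U * Matrix.diagonal (fun i => ((σ i : ℝ) : ℂ)) * Vmᴴ)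
    (η : ℝ) (hη : 0 < η) (k : ℕ) (hk : 1 ≤ k) (hkn : k < n)
    (hgap : ∀ r (hr1 : 1 ≤ r) (hrk : r ≤ k),
      η * (∑ i, ∑ j, ‖A i j‖ ^ 2) ≤
        σ ⟨r - 1, by omega⟩ ^ 2 - σ ⟨r, by omega⟩ ^ 2)
    (ℓ : ℕ) (hkl : k ≤ ℓ)
    (Λ : Matrix (Fin n) (Fin ℓ) ℂ) (hΛ : Λᴴ * Λ = 1)
    (P : ℕ → Matrix (Fin n) (Fin n) ℂ)
    (hP : ∀ (r : ℕ) (i i' : Fin n), P r i i' =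
      ∑ j ∈ univ.filter (fun j : Fin ℓ => j.val < r), Λ i j * (starRingEnd ℂ) (Λ i' j))
    (Ar : ℕ → Matrix (Fin m) (Fin n) ℂ)
    (hAr : ∀ r, Ar r =
      U * Matrix.diagonal (fun i : Fin n => if i.val < r then ((σ i : ℝ) : ℂ) else 0) * Vmᴴ)
    (ε : ℝ) (hε : 0 ≤ ε)
    (happrox : ∀ r, 1 ≤ r → r ≤ k →
      (∑ i, ∑ j, ‖(A - A * P r) i j‖ ^ 2) ≤
        (∑ i, ∑ j, ‖(A - Ar r) i j‖ ^ 2) + ε * ∑ i, ∑ j, ‖A i j‖ ^ 2) :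
    ∀ r (hr1 : 1 ≤ r) (hrk : r ≤ k),
      1 - 2 * ε / η ≤
        ‖∑ i, (starRingEnd ℂ) (Vm i ⟨r - 1, by omega⟩) * Λ i ⟨r - 1, by omega⟩‖ ^ 2 := by
  classical
  set W : ℝ := ∑ i, ∑ j, ‖A i j‖ ^ 2 with hWdef
  have hWpos : 0 < W := by
    obtain ⟨p, q, hpq⟩ : ∃ p q, A p q ≠ 0 := by
      by_contra h; push_neg at h
      exact hA (by ext p q; simpa using h p q)
    have h1 : (0:ℝ) < ‖A p q‖^2 := pow_pos (norm_pos_iff.mpr hpq) 2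
    have h2 : ‖A p q‖^2 ≤ ∑ j, ‖A p j‖^2 :=
      Finset.single_le_sum (f := fun j => ‖A p j‖^2)
        (fun j _ => pow_nonneg (norm_nonneg _) 2) (mem_univ q)
    have h3 : ∑ j, ‖A p j‖^2 ≤ W :=
      Finset.single_le_sum (f := fun i => ∑ j, ‖A i j‖^2)
        (fun i _ => Finset.sum_nonneg fun j _ => pow_nonneg (norm_nonneg _) 2) (mem_univ p)
    linarith
  have hWσ : W = ∑ i, (σ i)^2 := by
    rw [hWdef, hAsvd, frob_svd U hU Vm hV]
    refine Finset.sum_congr rfl fun i _ => ?_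
    simp [Complex.sq_norm, Complex.normSq_apply, sq]
  have hcnn : ∀ (i : Fin n) (j : Fin ℓ), (0:ℝ) ≤ ‖(Vmᴴ * Λ) i j‖^2 :=
    fun i j => pow_nonneg (norm_nonneg _) 2
  have hcol : ∀ j, ∑ i, ‖(Vmᴴ * Λ) i j‖^2 = 1 := colsum Vm hV Λ hΛ
  have hrow : ∀ i, ∑ j, ‖(Vmᴴ * Λ) i j‖^2 ≤ 1 := rowsum Vm hV Λ hΛ
  have hρle : ∀ (s : ℕ) (i : Fin n),
      ∑ j ∈ univ.filter (fun j : Fin ℓ => j.val < s), ‖(Vmᴴ * Λ) i j‖^2 ≤ 1 :=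
    fun s i => le_trans (Finset.sum_le_sum_of_subset_of_nonneg
      (Finset.filter_subset _ _) (fun j _ _ => hcnn i j)) (hrow i)
  have hρnn : ∀ (s : ℕ) (i : Fin n),
      (0:ℝ) ≤ ∑ j ∈ univ.filter (fun j : Fin ℓ => j.val < s), ‖(Vmᴴ * Λ) i j‖^2 :=
    fun s i => Finset.sum_nonneg fun j _ => hcnn i j
  -- Frobenius of A - Ar s
  have hArs : ∀ s : ℕ, ∑ i, ∑ j, ‖(A - Ar s) i j‖^2
      = W - ∑ i ∈ univ.filter (fun i : Fin n => i.val < s), (σ i)^2 := by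
    intro s
    have hdiff : A - Ar s = U * Matrix.diagonal
        (fun i : Fin n => if i.val < s then 0 else ((σ i : ℝ) : ℂ)) * Vmᴴ := by
      rw [hAsvd, hAr, ← Matrix.sub_mul, ← Matrix.mul_sub]
      have hdd : Matrix.diagonal (fun i : Fin n => ((σ i : ℝ) : ℂ))
          - Matrix.diagonal (fun i : Fin n => if i.val < s then ((σ i : ℝ) : ℂ) else 0)
          = Matrix.diagonal (fun i : Fin n => if i.val < s then 0 else ((σ i : ℝ) : ℂ)) := by
        rw [Matrix.diagonal_sub]
        refine congrArg Matrix.diagonal (funext fun i => ?_)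
        by_cases h : i.val < s <;> simp [h]
      rw [hdd]
    rw [hdiff, frob_svd U hU Vm hV]
    have h1 : ∀ i : Fin n, ‖(if i.val < s then (0:ℂ) else ((σ i : ℝ):ℂ))‖^2
        = if i.val < s then 0 else (σ i)^2 := by
      intro i; by_cases h : i.val < s <;> simp [h, Complex.sq_norm, Complex.normSq_apply, sq]
    rw [Finset.sum_congr rfl fun i _ => h1 i, hWσ]
    have h2 : ∑ i : Fin n, (if i.val < s then (0:ℝ) else (σ i)^2)
        = ∑ i ∈ univ.filter (fun i : Fin n => ¬ i.val < s), (σ i)^2 := by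
      rw [Finset.sum_filter]
      refine Finset.sum_congr rfl fun i _ => ?_
      by_cases h : i.val < s <;> simp [h]
    have h3 := Finset.sum_filter_add_sum_filter_not (univ : Finset (Fin n))
      (fun i : Fin n => i.val < s) (fun i => (σ i)^2)
    rw [h2]; linarith
  -- Frobenius of A - A * P s
  have hPs : ∀ s : ℕ, ∑ i, ∑ j, ‖(A - A * P s) i j‖^2
      = W - ∑ j ∈ univ.filter (fun j : Fin ℓ => j.val < s),
          ∑ i, (σ i)^2 * ‖(Vmᴴ * Λ) i j‖^2 := by
    intro s
    set E := Matrix.diagonal (fun j : Fin ℓ => if j.val < s then (1:ℂ) else 0) with hE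
    set N := Λ * E with hN
    have hEE : E * E = E := by
      rw [hE, Matrix.diagonal_mul_diagonal]
      refine congrArg Matrix.diagonal (funext fun j => ?_)
      by_cases h : j.val < s <;> simp [h]
    have hEH : Eᴴ = E := by
      rw [hE, Matrix.diagonal_conjTranspose]
      refine congrArg Matrix.diagonal (funext fun j => ?_)
      by_cases h : j.val < s <;> simp [h, Pi.star_def]
    have hNE : ∀ (i : Fin n) (j : Fin ℓ), N i j = if j.val < s then Λ i j else 0 := by
      intro i j
      rw [hN, Matrix.mul_diagonal]
      by_cases h : j.val < s <;> simp [h]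
    have hNNN : N * (Nᴴ * N) = N := by
      have h1 : Nᴴ * N = E := by
        rw [hN, Matrix.conjTranspose_mul, hEH, Matrix.mul_assoc,
          ← Matrix.mul_assoc Λᴴ Λ, hΛ, Matrix.one_mul, hEE]
      rw [h1, hN, Matrix.mul_assoc, hEE]
    have hPN : P s = N * Nᴴ := by
      ext i i'
      rw [hP, Matrix.mul_apply, Finset.sum_filter]
      refine Finset.sum_congr rfl fun j _ => ?_
      rw [Matrix.conjTranspose_apply, hNE, hNE]
      by_cases h : j.val < s <;> simp [h]
    have hcolAN : ∀ j : Fin ℓ, ∑ p, ‖(A*N) p j‖^2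
        = if j.val < s then ∑ i, (σ i)^2 * ‖(Vmᴴ * Λ) i j‖^2 else 0 := by
      intro j
      have hANcol : ∀ p, (A*N) p j = if j.val < s then (A*Λ) p j else 0 := by
        intro p
        rw [hN, ← Matrix.mul_assoc, Matrix.mul_diagonal]
        by_cases h : j.val < s <;> simp [h]
      rw [Finset.sum_congr rfl fun p _ => by rw [hANcol p]]
      by_cases h : j.val < s
      · simp only [h, if_true]
        rw [← key3 U hU Vm σ Λ j, ← hAsvd]
      · simp [h]
    rw [hPN, proj_frob A N hNNN, ← hWdef]
    congr 1
    rw [Finset.sum_congr rfl fun j _ => hcolAN j, ← Finset.sum_filter]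
  -- main inequality per level
  have hmain : ∀ s, 1 ≤ s → s ≤ k →
      (∑ i ∈ univ.filter (fun i : Fin n => i.val < s), (σ i)^2)
        - (∑ j ∈ univ.filter (fun j : Fin ℓ => j.val < s),
            ∑ i, (σ i)^2 * ‖(Vmᴴ * Λ) i j‖^2) ≤ ε * W := by
    intro s hs1 hsk
    have h := happrox s hs1 hsk
    rw [hArs s, hPs s] at h
    linarith
  -- D_s ≤ ε / η for s ∈ [k]
  have hDr_le : ∀ s (hs1 : 1 ≤ s) (hsk : s ≤ k),
      ∑ i ∈ univ.filter (fun i : Fin n => i.val < s),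
        (1 - ∑ j ∈ univ.filter (fun j : Fin ℓ => j.val < s), ‖(Vmᴴ * Λ) i j‖^2) ≤ ε / η := by
    intro s hs1 hsk
    have hsn : s < n := lt_of_le_of_lt hsk hkn
    have hsl : s ≤ ℓ := le_trans hsk hkl
    have hgap' := hgap s hs1 hsk
    have hlo : ∀ i : Fin n, i.val < s → (σ ⟨s-1, by omega⟩)^2 ≤ (σ i)^2 := by
      intro i hi
      exact pow_le_pow_left₀ (hσnn _) (hσanti (by simp [Fin.le_def]; omega)) 2
    have hhi : ∀ i : Fin n, ¬ i.val < s → (σ i)^2 ≤ (σ ⟨s, hsn⟩)^2 := by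
      intro i hi
      exact pow_le_pow_left₀ (hσnn _) (hσanti (by simp [Fin.le_def]; omega)) 2
    have hkc := keycomb s hsn hsl (fun i => (σ i)^2) (fun i j => ‖(Vmᴴ * Λ) i j‖^2)
      hcnn hcol (fun i => hρle s i) ((σ ⟨s-1, by omega⟩)^2) ((σ ⟨s, hsn⟩)^2)
      hlo hhi (ε * W) (hmain s hs1 hsk) (η * W) hgap'
    rw [le_div_iff₀ hη]
    have hWmul : (∑ i ∈ univ.filter (fun i : Fin n => i.val < s),
        (1 - ∑ j ∈ univ.filter (fun j : Fin ℓ => j.val < s), ‖(Vmᴴ * Λ) i j‖^2)) * η * W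
        ≤ ε * W := by
      calc _ = η * W * (∑ i ∈ univ.filter (fun i : Fin n => i.val < s),
          (1 - ∑ j ∈ univ.filter (fun j : Fin ℓ => j.val < s), ‖(Vmᴴ * Λ) i j‖^2)) := by ring
        _ ≤ ε * W := hkc
    have := le_of_mul_le_mul_right hWmul hWpos
    linarith
  -- final extraction
  intro r hr1 hrk
  have hrn : r - 1 < n := by omega
  have hrl : r - 1 < ℓ := by omega
  have hεη : 0 ≤ ε / η := div_nonneg hε hη.le
  set a : Fin n := ⟨r-1, hrn⟩ with ha
  set b : Fin ℓ := ⟨r-1, hrl⟩ with hb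
  have hgoal : (∑ i, (starRingEnd ℂ) (Vm i a) * Λ i b) = (Vmᴴ * Λ) a b := by
    rw [Matrix.mul_apply]
    exact Finset.sum_congr rfl fun i _ => by rw [Matrix.conjTranspose_apply]; rfl
  show 1 - 2 * ε / η ≤ ‖∑ i, (starRingEnd ℂ) (Vm i a) * Λ i b‖ ^ 2
  rw [hgoal]
  -- step 1 : 1 - ρ_r a ≤ ε/η
  have hmem_a : a ∈ univ.filter (fun i : Fin n => i.val < r) :=
    Finset.mem_filter.mpr ⟨mem_univ _, by simp [ha]; omega⟩
  have h1 : 1 - ∑ j ∈ univ.filter (fun j : Fin ℓ => j.val < r), ‖(Vmᴴ * Λ) a j‖^2 ≤ ε / η := by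
    refine le_trans (Finset.single_le_sum
      (f := fun i => 1 - ∑ j ∈ univ.filter (fun j : Fin ℓ => j.val < r), ‖(Vmᴴ * Λ) i j‖^2)
      (fun i _ => by
        show (0:ℝ) ≤ 1 - ∑ j ∈ univ.filter (fun j : Fin ℓ => j.val < r), ‖(Vmᴴ * Λ) i j‖^2
        linarith [hρle r i]) hmem_a) (hDr_le r hr1 hrk)
  -- step 2 : split off column b
  have h2 : ∑ j ∈ univ.filter (fun j : Fin ℓ => j.val < r), ‖(Vmᴴ * Λ) a j‖^2
      = ‖(Vmᴴ * Λ) a b‖^2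
        + ∑ j ∈ univ.filter (fun j : Fin ℓ => j.val < r - 1), ‖(Vmᴴ * Λ) a j‖^2 := by
    have hins : univ.filter (fun j : Fin ℓ => j.val < r)
        = insert b (univ.filter (fun j : Fin ℓ => j.val < r - 1)) := by
      ext j
      simp only [Finset.mem_insert, Finset.mem_filter, mem_univ, true_and]
      constructor
      · intro hj
        rcases Nat.lt_or_ge j.val (r-1) with h' | h'
        · exact Or.inr h'
        · left
          have hjv : j.val = r - 1 := by omega
          rw [hb]; exact Fin.ext (by simp [hjv])
      · rintro (rfl | hj)
        · simp [hb]; omega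
        · omega
    rw [hins, Finset.sum_insert (by simp [hb])]
  -- step 3 : mass on earlier columns is small
  have h3 : ∑ j ∈ univ.filter (fun j : Fin ℓ => j.val < r - 1), ‖(Vmᴴ * Λ) a j‖^2 ≤ ε / η := by
    rcases Nat.lt_or_ge r 2 with hr2 | hr2
    · have hre : r = 1 := by omega
      subst hre
      simpa using hεη
    · have hs1 : 1 ≤ r - 1 := by omega
      have hsk : r - 1 ≤ k := by omega
      have hsn : r - 1 < n := by omega
      have hsl : r - 1 ≤ ℓ := by omega
      have hDs := hDr_le (r-1) hs1 hsk
      have hstep1 : ∑ j ∈ univ.filter (fun j : Fin ℓ => j.val < r - 1), ‖(Vmᴴ * Λ) a j‖^2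
          ≤ ∑ i ∈ univ.filter (fun i : Fin n => ¬ i.val < r - 1),
              ∑ j ∈ univ.filter (fun j : Fin ℓ => j.val < r - 1), ‖(Vmᴴ * Λ) i j‖^2 := by
        refine Finset.single_le_sum (fun i _ => hρnn (r-1) i) ?_
        refine Finset.mem_filter.mpr ⟨mem_univ _, ?_⟩
        simp [ha]
      have hstep2 : ∑ i ∈ univ.filter (fun i : Fin n => ¬ i.val < r - 1),
            ∑ j ∈ univ.filter (fun j : Fin ℓ => j.val < r - 1), ‖(Vmᴴ * Λ) i j‖^2
          = ∑ i ∈ univ.filter (fun i : Fin n => i.val < r - 1),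
              (1 - ∑ j ∈ univ.filter (fun j : Fin ℓ => j.val < r - 1), ‖(Vmᴴ * Λ) i j‖^2) := by
        have hAll : ∑ i : Fin n,
            ∑ j ∈ univ.filter (fun j : Fin ℓ => j.val < r - 1), ‖(Vmᴴ * Λ) i j‖^2
            = ((r : ℝ) - 1) := by
          rw [Finset.sum_comm]
          rw [Finset.sum_congr rfl fun j _ => hcol j, Finset.sum_const,
            cardlt ℓ (r-1) hsl, nsmul_eq_mul, mul_one]
          push_cast [Nat.cast_sub hr1]
          ring
        have hfil := Finset.sum_filter_add_sum_filter_not (univ : Finset (Fin n))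
          (fun i : Fin n => i.val < r - 1)
          (fun i => ∑ j ∈ univ.filter (fun j : Fin ℓ => j.val < r - 1), ‖(Vmᴴ * Λ) i j‖^2)
        rw [Finset.sum_sub_distrib, Finset.sum_const, cardlt n (r-1) hsn.le,
          nsmul_eq_mul, mul_one]
        push_cast [Nat.cast_sub hr1]
        linarith
      calc ∑ j ∈ univ.filter (fun j : Fin ℓ => j.val < r - 1), ‖(Vmᴴ * Λ) a j‖^2
          ≤ _ := hstep1
        _ = _ := hstep2
        _ ≤ ε / η := hDs
  have h2e : (2:ℝ) * ε / η = ε/η + ε/η := by ring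
  linarith [h1, h2.le, h3, h2.ge]
end
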